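/- arXiv:1001.0596 — 7 statements merged into one kernel-verified Lean document; each statement's English description precedes it below -/
import Mathlib

section
/- Let X be a topological space and κ a cardinal such that πw(X) < cf(κ) ≤ κ ≤ w(X). Then X has no κ^op-like base; in particular, the Noetherian type of X is greater than κ. -/
open Cardinal Set TopologicalSpace

universe u

/-- A family `B` of subsets of a space is `κ`-op-like if every member of `B`
has fewer than `κ`-many supersets in `B`. -/
def OpLike {X : Type u} (κ : Cardinal.{u}) (B : Set (Set X)) : Prop :=
  ∀ U ∈ B, #{V ∈ B | U ⊆ V} < κ

/-- The Noetherian type of a space: the least infinite `κ` such that the space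
has a `κ`-op-like base. -/
noncomputable def NoetherianType (X : Type u) [TopologicalSpace X] : Cardinal.{u} :=
  sInf {κ : Cardinal.{u} | ℵ₀ ≤ κ ∧ ∃ B : Set (Set X), IsTopologicalBasis B ∧ OpLike κ B}

/-- The weight of a space: the least infinite `κ` such that the space has
a base of cardinality at most `κ`. -/
noncomputable def Weight (X : Type u) [TopologicalSpace X] : Cardinal.{u} :=
  sInf {κ : Cardinal.{u} | ℵ₀ ≤ κ ∧ ∃ B : Set (Set X), IsTopologicalBasis B ∧ #B ≤ κ}

/-- A π-base: a family of nonempty open sets such that every nonempty open set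
contains a member of the family. -/
def IsPiBase {X : Type u} [TopologicalSpace X] (B : Set (Set X)) : Prop :=
  (∀ U ∈ B, IsOpen U ∧ U.Nonempty) ∧
    ∀ U : Set X, IsOpen U → U.Nonempty → ∃ V ∈ B, V ⊆ U

/-- The π-weight of a space: the least infinite `κ` such that the space has
a π-base of cardinality at most `κ`. -/
noncomputable def PiWeight (X : Type u) [TopologicalSpace X] : Cardinal.{u} :=
  sInf {κ : Cardinal.{u} | ℵ₀ ≤ κ ∧ ∃ B : Set (Set X), IsPiBase B ∧ #B ≤ κ}

/-- The density of a space: the least infinite `κ` such that the space has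
a dense subset of cardinality at most `κ`. -/
noncomputable def Density (X : Type u) [TopologicalSpace X] : Cardinal.{u} :=
  sInf {κ : Cardinal.{u} | ℵ₀ ≤ κ ∧ ∃ D : Set X, Dense D ∧ #D ≤ κ}

/-- A GO-space: a linearly ordered set whose topology is induced by an order
embedding into some linearly ordered topological space (a linear order with
its order topology). -/
def IsGOSpace (X : Type u) [LinearOrder X] [tX : TopologicalSpace X] : Prop :=
  ∃ (Y : Type u) (lo : LinearOrder Y) (e : X → Y),
    @StrictMono X Y _ lo.toPartialOrder.toPreorder e ∧
    tX = TopologicalSpace.induced e (@Preorder.topology Y lo.toPartialOrder.toPreorder)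

/-- A space is `μ`-compact if every open cover has a subcover of cardinality
less than `μ`. -/
def MuCompact (μ : Cardinal.{u}) (X : Type u) [TopologicalSpace X] : Prop :=
  ∀ 𝒰 : Set (Set X), (∀ U ∈ 𝒰, IsOpen U) → ⋃₀ 𝒰 = Set.univ →
    ∃ 𝒱 ⊆ 𝒰, #𝒱 < μ ∧ ⋃₀ 𝒱 = Set.univ

/-- A cardinal is weakly inaccessible if it is uncountable, regular, and
a limit cardinal. -/
def IsWeaklyInaccessible (κ : Cardinal.{u}) : Prop :=
  ℵ₀ < κ ∧ κ.IsRegular ∧ ∀ μ < κ, Order.succ μ < κ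

/-!
Let `B` be a base and `P` a π-base with `|P| < cf κ`. Since `κ ≤ w(X)`, `B` has at least `κ`
nonempty members, and each of them contains some member of `P`; by the infinite pigeonhole
principle some `p ∈ P` is contained in `κ` many members of `B`. Any member of `B` inside `p` then has
`κ` many supersets in `B`, so `B` is not `κ^op`-like.
-/

theorem OpLike.mono {X : Type u} {κ μ : Cardinal.{u}} {B : Set (Set X)} (hB : OpLike κ B)
    (hκμ : κ ≤ μ) : OpLike μ B :=
  fun U hU => (hB U hU).trans_le hκμ

theorem OpLike.subset {X : Type u} {κ : Cardinal.{u}} {B C : Set (Set X)} (hB : OpLike κ B)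
    (hCB : C ⊆ B) : OpLike κ C :=
  fun U hU => (hB U (hCB hU)).trans_le' (mk_le_mk_of_subset fun _ => And.imp_left (@hCB _))

section CardinalFunctions

variable {X : Type u} [TopologicalSpace X]

theorem weight_le_max_aleph0_mk {B : Set (Set X)} (hB : IsTopologicalBasis B) :
    Weight X ≤ max ℵ₀ #B :=
  csInf_le' ⟨le_max_left _ _, B, hB, le_max_right _ _⟩

theorem isPiBase_setOf_nonempty_isOpen : IsPiBase {U : Set X | IsOpen U ∧ U.Nonempty} :=
  ⟨fun _ hU => hU, fun U hU hne => ⟨U, ⟨hU, hne⟩, subset_rfl⟩⟩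

theorem piWeight_spec :
    ℵ₀ ≤ PiWeight X ∧ ∃ P : Set (Set X), IsPiBase P ∧ #P ≤ PiWeight X :=
  csInf_mem (s := {κ | ℵ₀ ≤ κ ∧ ∃ P : Set (Set X), IsPiBase P ∧ #P ≤ κ})
    ⟨max ℵ₀ #(Set X), le_max_left _ _, _, isPiBase_setOf_nonempty_isOpen,
      (mk_set_le _).trans (le_max_right _ _)⟩

theorem noetherianType_spec :
    ∃ B : Set (Set X), IsTopologicalBasis B ∧ OpLike (NoetherianType X) B :=
  (csInf_mem (s := {κ | ℵ₀ ≤ κ ∧ ∃ B : Set (Set X), IsTopologicalBasis B ∧ OpLike κ B})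
    ⟨Order.succ (max ℵ₀ #(Set X)), (le_max_left _ _).trans (Order.le_succ _),
      _, isTopologicalBasis_opens,
      fun _ _ => ((mk_set_le _).trans (le_max_right _ _)).trans_lt (Order.lt_succ _)⟩).2

end CardinalFunctions

section PiBase

variable {X : Type u} [TopologicalSpace X] {P B : Set (Set X)} {κ : Cardinal.{u}}

theorem IsPiBase.exists_card_le_supersets (hP : IsPiBase P) (hBo : ∀ U ∈ B, IsOpen U)
    (hBne : ∀ U ∈ B, U.Nonempty) (hκ : ℵ₀ ≤ κ) (hκB : κ ≤ #B) (hPκ : #P < κ.ord.cof) :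
    ∃ p ∈ P, κ ≤ #{U ∈ B | p ⊆ U} := by
  choose f hfP hf using fun U : B => hP.2 U (hBo U U.2) (hBne U U.2)
  obtain ⟨⟨p, hp⟩, hfiber⟩ :=
    infinite_pigeonhole_card (fun U : B => (⟨f U, hfP U⟩ : P)) κ hκB hκ hPκ
  refine ⟨p, hp, hfiber.trans (mk_le_of_injective (f := fun U => ⟨U.1.1, U.1.2, ?_⟩) ?_)⟩
  · obtain ⟨U, hU⟩ := U
    simp only [mem_preimage, mem_singleton_iff, Subtype.mk.injEq] at hU
    exact hU ▸ hf U
  · rintro ⟨⟨U, _⟩, _⟩ ⟨⟨V, _⟩, _⟩ h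
    simpa using h

theorem IsPiBase.not_opLike (hP : IsPiBase P) (hB : IsTopologicalBasis B)
    (hBne : ∀ U ∈ B, U.Nonempty) (hκ : ℵ₀ ≤ κ) (hκB : κ ≤ #B) (hPκ : #P < κ.ord.cof) :
    ¬ OpLike κ B := by
  intro hop
  obtain ⟨p, hpP, hpκ⟩ := hP.exists_card_le_supersets (fun U hU => hB.isOpen hU) hBne hκ hκB hPκ
  obtain ⟨hpo, x, hx⟩ := hP.1 p hpP
  obtain ⟨W, hWB, -, hWp⟩ := hB.exists_subset_of_mem_open hx hpo
  have : {U ∈ B | p ⊆ U} ⊆ {V ∈ B | W ⊆ V} := fun V hV => ⟨hV.1, hWp.trans hV.2⟩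
  exact (hop W hWB).not_ge (hpκ.trans (mk_le_mk_of_subset this))

end PiBase

theorem statement0_general {X : Type u} [TopologicalSpace X] (κ : Cardinal.{u})
    (h1 : PiWeight X < κ.ord.cof) (h3 : κ ≤ Weight X) :
    (¬ ∃ B : Set (Set X), IsTopologicalBasis B ∧ OpLike κ B) ∧
    κ < NoetherianType X := by
  obtain ⟨hPiω, P, hP, hPle⟩ := piWeight_spec (X := X)
  have hκω : ℵ₀ < κ := (hPiω.trans_lt h1).trans_le (Ordinal.cof_ord_le κ)
  have noBase : ¬ ∃ B : Set (Set X), IsTopologicalBasis B ∧ OpLike κ B := by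
    rintro ⟨B, hB, hop⟩
    have hB' := hB.sdiff_empty
    have hκB' : κ ≤ #(B \ {∅} : Set (Set X)) := by
      by_contra! hlt
      exact (h3.trans (weight_le_max_aleph0_mk hB')).not_gt (max_lt hκω hlt)
    exact hP.not_opLike hB' (fun U hU => nonempty_iff_ne_empty.2 hU.2) hκω.le hκB'
      (hPle.trans_lt h1) (hop.subset sdiff_subset)
  refine ⟨noBase, lt_of_not_ge fun hle => noBase ?_⟩
  obtain ⟨B, hB, hop⟩ := noetherianType_spec (X := X)
  exact ⟨B, hB, hop.mono hle⟩

/-- If `πw(X) < cf(κ) ≤ κ ≤ w(X)`, then `X` has no `κ`-op-like base;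
in particular `Nt(X) > κ`. -/
theorem statement0 {X : Type u} [TopologicalSpace X] (κ : Cardinal.{u})
    (h1 : PiWeight X < κ.ord.cof) (h2 : κ.ord.cof ≤ κ) (h3 : κ ≤ Weight X) :
    (¬ ∃ B : Set (Set X), IsTopologicalBasis B ∧ OpLike κ B) ∧
    κ < NoetherianType X :=
  statement0_general κ h1 h3
end

section
/- Let D be the double-arrow space: the set ((0,1] × {0}) ∪ ([0,1) × {1}) ⊆ ℝ × {0,1}, linearly ordered lexicographically and equipped with the order topology of this linear order. Then πw(D) = ω, w(D) = 2^ℵ0, and Nt(D) = (2^ℵ0)^+; in particular, D has a base of cardinality 2^ℵ0 but has no (2^ℵ0)^op-like base. -/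
open Cardinal Set TopologicalSpace

universe u

/-- The double-arrow space: `((0,1] × {0}) ∪ ([0,1) × {1})`, ordered
lexicographically (with `false < true` playing the role of `0 < 1`). -/
def DoubleArrow : Type :=
  {p : ℝ ×ₗ Bool //
    (0 < (ofLex p).1 ∧ (ofLex p).1 ≤ 1 ∧ (ofLex p).2 = false) ∨
    (0 ≤ (ofLex p).1 ∧ (ofLex p).1 < 1 ∧ (ofLex p).2 = true)}

noncomputable instance : LinearOrder DoubleArrow := by unfold DoubleArrow; infer_instance

/-- The double-arrow space carries the order topology of its lexicographic order. -/
noncomputable instance : TopologicalSpace DoubleArrow := Preorder.topology DoubleArrow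

instance : OrderTopology DoubleArrow := ⟨rfl⟩


/-!
Rational strips `{p | q < p.1 < r}` form a countable π-base. Every `x ∈ (0, 1)` gives a jump
`(x, 0) ⋖ (x, 1)`, so any base contains a set with least element `(x, 1)` for each such `x`;
these sets are pairwise distinct, whence `w = 𝔠` (finite intersections of open rays give a base
of size `𝔠`). For the Noetherian type, such a set `U x` also contains a strip `(x, q x)`; choose
a rational `x < r x < q x`. As `cof 𝔠 > ℵ₀`, continuum many `x` share the pair `(r, q)`, and any
basic `W` with `(r, 1) ∈ W ⊆ ((r, 0), (q, 0))` lies in all of the corresponding `U x`.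
-/

open Topology Function

lemma OpLike.of_mk_lt {X : Type u} {κ : Cardinal.{u}} {B : Set (Set X)} (h : #B < κ) :
    OpLike κ B :=
  fun _ _ => (mk_le_mk_of_subset (sep_subset _ _)).trans_lt h

lemma injective_of_isLeast {ι α : Type*} [PartialOrder α] {U : ι → Set α} {b : ι → α}
    (hb : Injective b) (h : ∀ i, IsLeast (U i) (b i)) : Injective U :=
  fun i j hij => hb ((h i).unique (hij ▸ h j))

lemma exists_continuum_le_mk_preimage {β α : Type u} [Countable α] (f : β → α)
    (hβ : 𝔠 ≤ #β) : ∃ a, 𝔠 ≤ #(f ⁻¹' {a}) := by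
  refine infinite_pigeonhole_card f 𝔠 hβ aleph0_le_continuum ?_
  rw [← two_power_aleph0]
  exact mk_le_aleph0.trans_lt (lt_cof_ord_power le_rfl one_lt_two)

section OrderTopology

variable {X : Type u} [LinearOrder X] [TopologicalSpace X] [OrderTopology X]

lemma exists_isTopologicalBasis_mk_le [Infinite X] :
    ∃ B : Set (Set X), IsTopologicalBasis B ∧ #B ≤ #X := by
  refine ⟨range fun fg : Finset X × Finset X => (⋂ a ∈ fg.1, Ioi a) ∩ ⋂ a ∈ fg.2, Iio a,
    ?_, mk_range_le.trans ?_⟩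
  · convert isTopologicalBasis_biInter_Ioi_Iio_of_generateFrom (α := X) univ
      (by simp only [mem_univ, true_and]; exact OrderTopology.topology_eq_generate_intervals)
      using 1
    ext s
    constructor
    · rintro ⟨⟨f, g⟩, rfl⟩
      exact ⟨f, g, subset_univ _, subset_univ _, f.finite_toSet, g.finite_toSet, by simp⟩
    · rintro ⟨f, g, -, -, hf, hg, rfl⟩
      exact ⟨⟨hf.toFinset, hg.toFinset⟩, by simp⟩
  · rw [mk_prod, lift_id, mk_finset_of_infinite, mul_eq_self (aleph0_le_mk X)]

omit [TopologicalSpace X] [OrderTopology X] in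
lemma CovBy.isLeast_of_mem_of_subset_Ioi {a b : X} {U : Set X} (hab : a ⋖ b) (hb : b ∈ U)
    (hU : U ⊆ Ioi a) : IsLeast U b :=
  ⟨hb, fun x hx => show x ∈ Ici b from hab.Ioi_eq ▸ hU hx⟩

lemma TopologicalSpace.IsTopologicalBasis.exists_isLeast_of_covBy {B : Set (Set X)}
    (hB : IsTopologicalBasis B) {a b : X} (hab : a ⋖ b) : ∃ U ∈ B, IsLeast U b := by
  obtain ⟨U, hUB, hbU, hU⟩ := hB.exists_subset_of_mem_open hab.lt isOpen_Ioi
  exact ⟨U, hUB, hab.isLeast_of_mem_of_subset_Ioi hbU hU⟩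

lemma TopologicalSpace.IsTopologicalBasis.mk_le_of_covBy {B : Set (Set X)}
    (hB : IsTopologicalBasis B) {ι : Type u} {a b : ι → X} (hab : ∀ i, a i ⋖ b i)
    (hb : Injective b) : #ι ≤ #B := by
  choose U hUB hU using fun i => hB.exists_isLeast_of_covBy (hab i)
  exact mk_le_of_injective (f := fun i => (⟨U i, hUB i⟩ : B)) fun i j hij =>
    injective_of_isLeast hb hU (congrArg Subtype.val hij)

end OrderTopology

namespace DoubleArrow

def fst (p : DoubleArrow) : ℝ := (ofLex p.1).1

def snd (p : DoubleArrow) : Bool := (ofLex p.1).2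

lemma lt_iff {p q : DoubleArrow} : p < q ↔ p.fst < q.fst ∨ p.fst = q.fst ∧ p.snd < q.snd :=
  Prod.Lex.lt_iff (x := p.1) (y := q.1)

lemma mem_cases (p : DoubleArrow) :
    p.fst ∈ Ioc (0 : ℝ) 1 ∧ p.snd = false ∨ p.fst ∈ Ico (0 : ℝ) 1 ∧ p.snd = true := by
  rcases p.2 with ⟨h0, h1, h⟩ | ⟨h0, h1, h⟩
  · exact Or.inl ⟨⟨h0, h1⟩, h⟩
  · exact Or.inr ⟨⟨h0, h1⟩, h⟩

lemma fst_nonneg (p : DoubleArrow) : 0 ≤ p.fst := by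
  rcases mem_cases p with ⟨h, -⟩ | ⟨h, -⟩
  exacts [h.1.le, h.1]

lemma fst_le_one (p : DoubleArrow) : p.fst ≤ 1 := by
  rcases mem_cases p with ⟨h, -⟩ | ⟨h, -⟩
  exacts [h.2, h.2.le]

lemma lt_of_fst_lt {p q : DoubleArrow} (h : p.fst < q.fst) : p < q := lt_iff.2 (Or.inl h)

lemma fst_mono : Monotone fst := fun p q hpq => by
  rcases hpq.lt_or_eq with h | rfl
  · rcases lt_iff.1 h with h | ⟨h, -⟩
    exacts [h.le, h.le]
  · exact le_rfl

lemma fst_lt_fst_of_lt_of_snd_eq_true {p q : DoubleArrow} (hpq : p < q) (hp : p.snd = true) :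
    p.fst < q.fst := by
  rcases lt_iff.1 hpq with h | ⟨-, h⟩
  · exact h
  · simp [hp, Bool.lt_iff] at h

lemma fst_lt_fst_of_lt_of_snd_eq_false {p q : DoubleArrow} (hpq : p < q) (hq : q.snd = false) :
    p.fst < q.fst := by
  rcases lt_iff.1 hpq with h | ⟨-, h⟩
  · exact h
  · simp [hq, Bool.lt_iff] at h

def lower (x : ℝ) (hx : x ∈ Ioc (0 : ℝ) 1) : DoubleArrow :=
  ⟨toLex (x, false), Or.inl ⟨hx.1, hx.2, rfl⟩⟩

def upper (x : ℝ) (hx : x ∈ Ico (0 : ℝ) 1) : DoubleArrow :=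
  ⟨toLex (x, true), Or.inr ⟨hx.1, hx.2, rfl⟩⟩

@[simp] lemma fst_lower (x : ℝ) (hx) : (lower x hx).fst = x := rfl
@[simp] lemma snd_lower (x : ℝ) (hx) : (lower x hx).snd = false := rfl
@[simp] lemma snd_upper (x : ℝ) (hx) : (upper x hx).snd = true := rfl

lemma upper_lt_iff {x : ℝ} {hx} {p : DoubleArrow} : upper x hx < p ↔ x < p.fst :=
  ⟨fun h => fst_lt_fst_of_lt_of_snd_eq_true h rfl, fun h => lt_of_fst_lt h⟩

lemma lt_lower_iff {x : ℝ} {hx} {p : DoubleArrow} : p < lower x hx ↔ p.fst < x :=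
  ⟨fun h => fst_lt_fst_of_lt_of_snd_eq_false h rfl, fun h => lt_of_fst_lt h⟩

lemma lower_covBy_upper {x : ℝ} (hx : x ∈ Ioo (0 : ℝ) 1) :
    lower x (Ioo_subset_Ioc_self hx) ⋖ upper x (Ioo_subset_Ico_self hx) := by
  refine ⟨lt_iff.2 (Or.inr ⟨rfl, by simp⟩), fun c hlc hcu => ?_⟩
  have hc : c.fst = x := le_antisymm (fst_mono hcu.le) (fst_mono hlc.le)
  rcases lt_iff.1 hlc with h | ⟨-, h⟩
  · exact h.ne' hc
  rcases lt_iff.1 hcu with h' | ⟨-, h'⟩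
  · exact h'.ne hc
  simp_all [Bool.lt_iff]

lemma fst_preimage_Ioo {a b : ℝ} (ha : a ∈ Ico (0 : ℝ) 1) (hb : b ∈ Ioc (0 : ℝ) 1) :
    fst ⁻¹' Ioo a b = Ioo (upper a ha) (lower b hb) := by
  ext p
  simp only [mem_preimage, mem_Ioo, upper_lt_iff, lt_lower_iff]

lemma isOpen_fst_preimage_Ioo {a b : ℝ} (ha : 0 ≤ a) (hab : a < b) (hb : b ≤ 1) :
    IsOpen (fst ⁻¹' Ioo a b) := by
  rw [fst_preimage_Ioo ⟨ha, hab.trans_le hb⟩ ⟨ha.trans_lt hab, hb⟩]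
  exact isOpen_Ioo

lemma mk_le_continuum : #DoubleArrow ≤ 𝔠 := by
  refine (mk_subtype_le _).trans ?_
  rw [show #(ℝ ×ₗ Bool) = #(ℝ × Bool) from mk_congr toLex.symm, mk_prod, lift_id, lift_id,
    mk_real, mk_bool]
  exact (mul_le_mul' le_rfl (nat_lt_continuum 2).le).trans (mul_eq_self aleph0_le_continuum).le

lemma upper_injective : Injective fun x : Ioo (0 : ℝ) 1 => upper x (Ioo_subset_Ico_self x.2) :=
  fun _ _ h => Subtype.ext (congrArg fst h)

instance : Infinite DoubleArrow :=
  have := (Ioo_infinite (zero_lt_one' ℝ)).to_subtype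
  Infinite.of_injective _ upper_injective

lemma exists_fst_preimage_Ioo_subset {U : Set DoubleArrow} (hU : IsOpen U) (hne : U.Nonempty) :
    ∃ a b : ℝ, 0 ≤ a ∧ a < b ∧ b ≤ 1 ∧ fst ⁻¹' Ioo a b ⊆ U := by
  obtain ⟨z, hz⟩ := hne
  rcases mem_cases z with ⟨hz01, hsnd⟩ | ⟨hz01, hsnd⟩
  · obtain ⟨l, hlz, hl⟩ := exists_Ioc_subset_of_mem_nhds (hU.mem_nhds hz)
      ⟨upper 0 ⟨le_rfl, one_pos⟩, upper_lt_iff.2 hz01.1⟩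
    exact ⟨l.fst, z.fst, fst_nonneg l, fst_lt_fst_of_lt_of_snd_eq_false hlz hsnd, fst_le_one z,
      fun p hp => hl ⟨lt_of_fst_lt hp.1, (lt_of_fst_lt hp.2).le⟩⟩
  · obtain ⟨v, hzv, hv⟩ := exists_Ico_subset_of_mem_nhds (hU.mem_nhds hz)
      ⟨lower 1 ⟨one_pos, le_rfl⟩, lt_lower_iff.2 hz01.2⟩
    exact ⟨z.fst, v.fst, fst_nonneg z, fst_lt_fst_of_lt_of_snd_eq_true hzv hsnd, fst_le_one v,
      fun p hp => hv ⟨(lt_of_fst_lt hp.1).le, lt_of_fst_lt hp.2⟩⟩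

def ratStrips : Set (Set DoubleArrow) :=
  {S | ∃ q r : ℚ, 0 ≤ (q : ℝ) ∧ (q : ℝ) < r ∧ (r : ℝ) ≤ 1 ∧ S = fst ⁻¹' Ioo (q : ℝ) r}

lemma mk_ratStrips_le : #ratStrips ≤ ℵ₀ := by
  have hsub : ratStrips ⊆ range fun qr : ℚ × ℚ => fst ⁻¹' Ioo (qr.1 : ℝ) qr.2 := by
    rintro S ⟨q, r, -, -, -, rfl⟩
    exact ⟨(q, r), rfl⟩
  exact (mk_le_mk_of_subset hsub).trans (mk_range_le.trans mk_le_aleph0)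

lemma isPiBase_ratStrips : IsPiBase ratStrips := by
  refine ⟨?_, fun U hU hne => ?_⟩
  · rintro S ⟨q, r, hq, hqr, hr, rfl⟩
    obtain ⟨c, hqc, hcr⟩ := exists_between hqr
    exact ⟨isOpen_fst_preimage_Ioo hq hqr hr,
      upper c ⟨hq.trans hqc.le, hcr.trans_le hr⟩, hqc, hcr⟩
  · obtain ⟨a, b, ha, hab, hb, hU⟩ := exists_fst_preimage_Ioo_subset hU hne
    obtain ⟨q, haq, hqb⟩ := exists_rat_btwn hab
    obtain ⟨r, hqr, hrb⟩ := exists_rat_btwn hqb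
    exact ⟨_, ⟨q, r, ha.trans haq.le, hqr, hrb.le.trans hb, rfl⟩,
      (preimage_mono (Ioo_subset_Ioo haq.le hrb.le)).trans hU⟩

lemma continuum_le_mk_of_isTopologicalBasis {B : Set (Set DoubleArrow)}
    (hB : IsTopologicalBasis B) : 𝔠 ≤ #B := by
  rw [← mk_Ioo_real zero_lt_one]
  exact hB.mk_le_of_covBy (fun x => lower_covBy_upper x.2) upper_injective

lemma exists_rat_fst_preimage_subset_of_mem_nhds {x : ℝ} {hx : x ∈ Ico (0 : ℝ) 1}
    {U : Set DoubleArrow} (hU : U ∈ 𝓝 (upper x hx)) :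
    ∃ r q : ℚ, x < r ∧ r < q ∧ (q : ℝ) ≤ 1 ∧ fst ⁻¹' Ioo x q ⊆ U := by
  obtain ⟨v, hxv, hv⟩ := exists_Ico_subset_of_mem_nhds hU
    ⟨lower 1 ⟨one_pos, le_rfl⟩, lt_lower_iff.2 hx.2⟩
  obtain ⟨r, hxr, hrv⟩ := exists_rat_btwn (upper_lt_iff.1 hxv)
  obtain ⟨q, hrq, hqv⟩ := exists_rat_btwn hrv
  exact ⟨r, q, hxr, mod_cast hrq, hqv.le.trans (fst_le_one v),
    fun p hp => hv ⟨(upper_lt_iff.2 hp.1).le, lt_of_fst_lt (hp.2.trans hqv)⟩⟩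

theorem exists_mem_continuum_le_mk_supersets {B : Set (Set DoubleArrow)}
    (hB : IsTopologicalBasis B) : ∃ W ∈ B, 𝔠 ≤ #{V ∈ B | W ⊆ V} := by
  have hU : ∀ x : Ioo (0 : ℝ) 1, ∃ U ∈ B, IsLeast U (upper x (Ioo_subset_Ico_self x.2)) ∧
      ∃ r q : ℚ, (x : ℝ) < r ∧ r < q ∧ (q : ℝ) ≤ 1 ∧ fst ⁻¹' Ioo (x : ℝ) q ⊆ U := by
    intro x
    obtain ⟨U, hUB, hU⟩ := hB.exists_isLeast_of_covBy (lower_covBy_upper x.2)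
    exact ⟨U, hUB, hU,
      exists_rat_fst_preimage_subset_of_mem_nhds ((hB.isOpen hUB).mem_nhds hU.1)⟩
  choose U hUB hleast r q hxr hrq hq hsub using hU
  obtain ⟨⟨r₀, q₀⟩, hfiber⟩ :=
    exists_continuum_le_mk_preimage (fun x => (r x, q x)) (mk_Ioo_real zero_lt_one).ge
  obtain ⟨⟨x₀, hx₀⟩⟩ := mk_ne_zero_iff.1 (continuum_pos.trans_le hfiber).ne'
  simp only [mem_preimage, mem_singleton_iff, Prod.mk.injEq] at hx₀
  obtain ⟨rfl, rfl⟩ := hx₀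
  have hr : (r x₀ : ℝ) ∈ Ioo (0 : ℝ) 1 :=
    ⟨x₀.2.1.trans (hxr x₀), (Rat.cast_lt.2 (hrq x₀)).trans_le (hq x₀)⟩
  have hq₀ : (q x₀ : ℝ) ∈ Ioc (0 : ℝ) 1 := ⟨hr.1.trans (mod_cast hrq x₀), hq x₀⟩
  obtain ⟨W, hWB, hW, hWsub⟩ := hB.exists_subset_of_mem_open
    (⟨(lower_covBy_upper hr).lt, lt_lower_iff.2 (Rat.cast_lt.2 (hrq x₀))⟩ :
      upper _ (Ioo_subset_Ico_self hr) ∈ Ioo (lower _ (Ioo_subset_Ioc_self hr)) (lower _ hq₀))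
    isOpen_Ioo
  refine ⟨W, hWB, hfiber.trans (mk_le_of_injective (f := fun x => ⟨U x, hUB x, ?_⟩) ?_)⟩
  · obtain ⟨x, hx⟩ := x
    simp only [mem_preimage, mem_singleton_iff, Prod.mk.injEq] at hx
    intro p hp
    obtain ⟨hrp, hpq⟩ := hWsub hp
    refine hsub x ⟨(hxr x).trans_le ?_, hx.2 ▸ lt_lower_iff.1 hpq⟩
    simpa [hx.1] using fst_mono hrp.le
  · exact fun x y hxy => Subtype.ext <|
      injective_of_isLeast upper_injective hleast (congrArg Subtype.val hxy)

lemma continuum_lt_of_opLike {κ : Cardinal} {B : Set (Set DoubleArrow)}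
    (hB : IsTopologicalBasis B) (hκ : OpLike κ B) : 𝔠 < κ := by
  obtain ⟨W, hWB, hW⟩ := exists_mem_continuum_le_mk_supersets hB
  exact hW.trans_lt (hκ W hWB)

end DoubleArrow

open DoubleArrow in
/-- The double-arrow space has π-weight `ω`, weight `2^ℵ₀`, and Noetherian type
`(2^ℵ₀)⁺`; in particular it has a base of cardinality `2^ℵ₀` but no
`(2^ℵ₀)`-op-like base. -/
theorem statement1 :
    PiWeight DoubleArrow = ℵ₀ ∧
    Weight DoubleArrow = Cardinal.continuum ∧
    NoetherianType DoubleArrow = Order.succ Cardinal.continuum ∧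
    (∃ B : Set (Set DoubleArrow), IsTopologicalBasis B ∧ #B ≤ Cardinal.continuum) ∧
    ¬ ∃ B : Set (Set DoubleArrow), IsTopologicalBasis B ∧ OpLike Cardinal.continuum B := by
  obtain ⟨B₀, hB₀, hB₀le⟩ := exists_isTopologicalBasis_mk_le (X := DoubleArrow)
  replace hB₀le := hB₀le.trans mk_le_continuum
  refine ⟨?_, ?_, ?_, ⟨B₀, hB₀, hB₀le⟩, fun ⟨B, hB, hop⟩ => (continuum_lt_of_opLike hB hop).false⟩
  · exact IsLeast.csInf_eq ⟨⟨le_rfl, ratStrips, isPiBase_ratStrips, mk_ratStrips_le⟩,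
      fun κ hκ => hκ.1⟩
  · exact IsLeast.csInf_eq ⟨⟨aleph0_le_continuum, B₀, hB₀, hB₀le⟩,
      fun κ ⟨_, B, hB, hBκ⟩ => (continuum_le_mk_of_isTopologicalBasis hB).trans hBκ⟩
  · exact IsLeast.csInf_eq ⟨⟨aleph0_le_continuum.trans (Order.le_succ _), B₀, hB₀,
      OpLike.of_mk_lt (hB₀le.trans_lt (Order.lt_succ _))⟩,
      fun κ ⟨_, B, hB, hop⟩ => Order.succ_le_of_lt (continuum_lt_of_opLike hB hop)⟩
end

section
/- Every metric space has an ω^op-like base; that is, every metric space has a base B for its topology such that every member of B is contained in only finitely many members of B. -/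
open Cardinal Set TopologicalSpace

universe u

/-- Every metric space has an `ω`-op-like base: a base in which every member
has only finitely many supersets. -/
theorem statement2 {X : Type u} [MetricSpace X] :
    ∃ B : Set (Set X), IsTopologicalBasis B ∧ OpLike ℵ₀ B := by
  have key : ∀ n : ℕ, ∃ v : X → Set X, (∀ a, IsOpen (v a)) ∧ (⋃ i, v i = Set.univ) ∧
      LocallyFinite v ∧ ∀ a, v a ⊆ Metric.ball a ((1/2 : ℝ)^n) := by
    intro n
    apply precise_refinement
    · intro a; exact Metric.isOpen_ball
    · apply iUnion_eq_univ_iff.2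
      intro x; exact ⟨x, Metric.mem_ball_self (by positivity)⟩
  choose v vo vc vlf vsub using key
  set B : Set (Set X) := {U | U.Nonempty ∧ ∃ n c, U = v n c} with hB
  have hsmall : ∀ n c x, x ∈ v n c → v n c ⊆ Metric.ball x (2 * (1/2 : ℝ)^n) := by
    intro n c x hx y hy
    have h1 := vsub n c hx
    have h2 := vsub n c hy
    rw [Metric.mem_ball] at h1 h2 ⊢
    have := dist_triangle y c x
    rw [dist_comm c x] at this
    linarith
  refine ⟨B, ?_, ?_⟩
  · apply isTopologicalBasis_of_isOpen_of_nhds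
    · rintro U ⟨-, n, c, rfl⟩; exact vo n c
    · intro x U hxU hU
      obtain ⟨r, hr, hball⟩ := Metric.isOpen_iff.1 hU x hxU
      obtain ⟨n, hn⟩ := exists_pow_lt_of_lt_one (by positivity : (0:ℝ) < r/2)
        (by norm_num : (1/2 : ℝ) < 1)
      obtain ⟨c, hc⟩ := iUnion_eq_univ_iff.1 (vc n) x
      refine ⟨v n c, ⟨⟨x, hc⟩, n, c, rfl⟩, hc, (hsmall n c x hc).trans ?_⟩
      apply (Metric.ball_subset_ball ?_).trans hball
      linarith
  · rintro U ⟨⟨x, hxU⟩, n, c, rfl⟩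
    have hU : IsOpen (v n c) := vo n c
    obtain ⟨r, hr, hball⟩ := Metric.isOpen_iff.1 hU x hxU
    obtain ⟨M, hM⟩ := exists_pow_lt_of_lt_one (by positivity : (0:ℝ) < r/2)
      (by norm_num : (1/2 : ℝ) < 1)
    rw [lt_aleph0_iff_set_finite]
    have hfin : (insert (v n c) (⋃ m ∈ Iic M, (v m) '' {c' | x ∈ v m c'})).Finite := by
      apply Set.Finite.insert
      apply Set.Finite.biUnion (finite_Iic M)
      intro m _
      exact ((vlf m).point_finite x).image _
    refine hfin.subset ?_
    rintro V ⟨⟨⟨y, hyV⟩, m, c', rfl⟩, hUV⟩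
    rcases le_or_gt m M with hm | hm
    · exact Or.inr (mem_biUnion hm ⟨c', hUV hxU, rfl⟩)
    · left
      have hsub : v m c' ⊆ v n c := by
        refine (hsmall m c' x (hUV hxU)).trans ((Metric.ball_subset_ball ?_).trans hball)
        have : (1/2 : ℝ)^m ≤ (1/2)^M := by
          apply pow_le_pow_of_le_one (by norm_num) (by norm_num) hm.le
        linarith
      exact subset_antisymm hsub hUV
end

section
/- Let X = ∏_{i∈I} X_i, where each X_i has a minimal open cover of size two, i.e., there are open sets U_i ≠ X_i and V_i ≠ X_i with U_i ≠ V_i and U_i ∪ V_i = X_i. If sup_{i∈I} w(X_i) ≤ |I|, then X has an ω^op-like base, i.e., Nt(X) = ω. -/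
open Cardinal Set TopologicalSpace

universe u

lemma aux_main {I : Type u} {X : I → Type u} [∀ i, TopologicalSpace (X i)]
    (hInf : ℵ₀ ≤ #I)
    (𝒜 : ∀ i, Set (Set (X i))) (h𝒜 : ∀ i, IsTopologicalBasis (𝒜 i))
    (hcard : ∀ i, #(𝒜 i) ≤ #I)
    (U V : ∀ i, Set (X i)) (hUo : ∀ i, IsOpen (U i)) (hVo : ∀ i, IsOpen (V i))
    (hU : ∀ i, U i ≠ Set.univ) (hV : ∀ i, V i ≠ Set.univ)
    (hUV : ∀ i, U i ∪ V i = Set.univ) :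
    ∃ B : Set (Set (∀ i, X i)), IsTopologicalBasis B ∧ OpLike ℵ₀ B := by
  classical
  -- cardinality plumbing
  have hDle : #(Σ i : I, (𝒜 i)) ≤ #I := by
    calc #(Σ i : I, (𝒜 i)) = Cardinal.sum fun i => #(𝒜 i) := mk_sigma _
      _ ≤ Cardinal.sum fun _ : I => #I := Cardinal.sum_le_sum _ _ fun i => hcard i
      _ = #I * #I := Cardinal.sum_const' _ _
      _ = #I := Cardinal.mul_eq_self hInf
  set D := Σ i : I, (𝒜 i) with hDdef
  have hFle : #(Finset D × ULift.{u} ℕ) ≤ #I := by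
    have h1 : #(Finset D) ≤ #I := by
      have e1 : #(Finset D) ≤ #(Finset (D ⊕ ULift.{u} ℕ)) :=
        Cardinal.mk_le_of_injective (Finset.mapEmbedding ⟨Sum.inl, Sum.inl_injective⟩).injective
      have e2 : #(Finset (D ⊕ ULift.{u} ℕ)) = #(D ⊕ ULift.{u} ℕ) := mk_finset_of_infinite _
      have e3 : #(D ⊕ ULift.{u} ℕ) ≤ #I := by
        have : #(D ⊕ ULift.{u} ℕ) = #D + ℵ₀ := by simp [Cardinal.mk_sum]
        rw [this]
        calc #D + ℵ₀ ≤ #I + #I := add_le_add hDle hInf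
          _ = #I := Cardinal.add_eq_self hInf
      exact e1.trans (e2 ▸ e3)
    have h2 : #(Finset D × ULift.{u} ℕ) = #(Finset D) * ℵ₀ := by
      simp [Cardinal.mk_prod]
    rw [h2]
    calc #(Finset D) * ℵ₀ ≤ #I * #I := mul_le_mul' h1 hInf
      _ = #I := Cardinal.mul_eq_self hInf
  obtain ⟨ψ⟩ : Nonempty (Finset D × ULift.{u} ℕ ↪ I) := (Cardinal.le_def _ _).1 hFle
  have hex : ∀ c : Finset D, ∃ n : ULift.{u} ℕ, ψ (c, n) ∉ c.image Sigma.fst := by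
    intro c
    have hinj : Function.Injective fun n : ULift.{u} ℕ => ψ (c, n) := by
      intro a b h
      simpa using congrArg Prod.snd (ψ.injective h)
    obtain ⟨j, hj1, hj2⟩ :=
      (Set.infinite_range_of_injective hinj).exists_notMem_finset (c.image Sigma.fst)
    obtain ⟨n, rfl⟩ := hj1
    exact ⟨n, hj2⟩
  set jdx : Finset D → I := fun c => ψ (c, (hex c).choose) with hjdxdef
  have hjdx : ∀ c, jdx c ∉ c.image Sigma.fst := fun c => (hex c).choose_spec
  have hjinj : ∀ {c c'}, jdx c = jdx c' → c = c' := by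
    intro c c' h
    exact congrArg Prod.fst (ψ.injective h)
  set W : Bool → ∀ i, Set (X i) := fun w i => if w then U i else V i with hWdef
  have hWo : ∀ w i, IsOpen (W w i) := by intro w i; cases w <;> simp [hWdef, hUo i, hVo i]
  have hWne : ∀ w i, W w i ≠ Set.univ := by intro w i; cases w <;> simp [hWdef, hU i, hV i]
  set β : Finset D → Bool → Set (∀ i, X i) := fun c w =>
    (⋂ d ∈ c, Function.eval d.1 ⁻¹' (d.2 : Set (X d.1))) ∩
      Function.eval (jdx c) ⁻¹' (W w (jdx c)) with hβdef
  have hmem : ∀ (c : Finset D) (w : Bool) (x : ∀ i, X i),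
      x ∈ β c w ↔ ((∀ d ∈ c, x d.1 ∈ (d.2 : Set (X d.1))) ∧ x (jdx c) ∈ W w (jdx c)) := by
    intro c w x
    simp [hβdef, Function.eval]
  refine ⟨{b | b.Nonempty ∧ ∃ c w, b = β c w}, ?_, ?_⟩
  · apply isTopologicalBasis_of_isOpen_of_nhds
    · rintro b ⟨-, c, w, rfl⟩
      refine IsOpen.inter (isOpen_biInter_finset fun d _ => ?_)
        ((hWo w _).preimage (continuous_apply _))
      exact ((h𝒜 d.1).isOpen d.2.2).preimage (continuous_apply d.1)
    · intro x O hxO hO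
      obtain ⟨S, hS, hxS, hSO⟩ := (isTopologicalBasis_pi h𝒜).exists_subset_of_mem_open hxO hO
      obtain ⟨Uf, F, hUf, rfl⟩ := hS
      set c : Finset D := F.attach.image
        (fun i => (⟨i.1, ⟨Uf i.1, hUf i.1 i.2⟩⟩ : D)) with hcdef
      have hc : ∀ y : ∀ i, X i,
          (∀ d ∈ c, y d.1 ∈ (d.2 : Set (X d.1))) ↔ ∀ i ∈ F, y i ∈ Uf i := by
        intro y
        constructor
        · intro h i hi
          exact h ⟨i, ⟨Uf i, hUf i hi⟩⟩
            (Finset.mem_image.2 ⟨⟨i, hi⟩, Finset.mem_attach _ _, rfl⟩)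
        · rintro h d hd
          obtain ⟨i, -, rfl⟩ := Finset.mem_image.1 hd
          exact h i.1 i.2
      obtain ⟨w, hw⟩ : ∃ w, x (jdx c) ∈ W w (jdx c) := by
        have hxW : x (jdx c) ∈ U (jdx c) ∪ V (jdx c) := (hUV _).symm ▸ Set.mem_univ _
        rcases hxW with h | h
        · exact ⟨true, by simpa [hWdef] using h⟩
        · exact ⟨false, by simpa [hWdef] using h⟩
      have hxβ : x ∈ β c w := (hmem c w x).2 ⟨(hc x).2 fun i hi => hxS i hi, hw⟩
      refine ⟨β c w, ⟨⟨x, hxβ⟩, c, w, rfl⟩, hxβ, ?_⟩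
      intro y hy
      exact hSO fun i hi => (hc y).1 ((hmem c w y).1 hy).1 i hi
  · rintro b ⟨⟨x, hx⟩, c, w, rfl⟩
    set K : Finset I := insert (jdx c) (c.image Sigma.fst) with hKdef
    have hclaim : ∀ c' w', β c w ⊆ β c' w' → jdx c' ∈ K := by
      intro c' w' hsub
      by_contra hj'
      obtain ⟨y, hy⟩ := (Set.ne_univ_iff_exists_notMem _).1 (hWne w' (jdx c'))
      have hx' : Function.update x (jdx c') y ∈ β c w := by
        obtain ⟨h1, h2⟩ := (hmem c w x).1 hx
        refine (hmem c w _).2 ⟨?_, ?_⟩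
        · intro d hd
          have hne : d.1 ≠ jdx c' := by
            intro h
            exact hj' (by rw [← h]; exact Finset.mem_insert_of_mem (Finset.mem_image_of_mem _ hd))
          rw [Function.update_of_ne hne]
          exact h1 d hd
        · have hne2 : jdx c ≠ jdx c' := by
            intro h
            exact hj' (by rw [← h]; exact Finset.mem_insert_self _ _)
          rw [Function.update_of_ne hne2]
          exact h2
      have h2 := ((hmem c' w' _).1 (hsub hx')).2
      rw [Function.update_self] at h2
      exact hy h2
    set Fn : I × Bool → Set (∀ i, X i) := fun p =>
      if h : ∃ c', jdx c' = p.1 then β h.choose p.2 else ∅ with hFndef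
    have hsub : {V' ∈ {b | b.Nonempty ∧ ∃ c w, b = β c w} | β c w ⊆ V'} ⊆
        Fn '' ((↑K : Set I) ×ˢ (Set.univ : Set Bool)) := by
      rintro V' ⟨⟨-, c', w', rfl⟩, hsubV⟩
      refine ⟨(jdx c', w'), ⟨hclaim c' w' hsubV, trivial⟩, ?_⟩
      have h : ∃ c'', jdx c'' = jdx c' := ⟨c', rfl⟩
      simp only [hFndef, dif_pos h]
      rw [hjinj h.choose_spec]
    exact ((Set.Finite.image Fn ((K.finite_toSet).prod Set.finite_univ)).subset hsub).lt_aleph0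

/-- If each factor `X i` has a minimal open cover of size two and
`sup_i w(X i) ≤ |I|`, then the product has an `ω`-op-like base, i.e., its
Noetherian type is `ω`. -/
theorem statement9 {I : Type u} {X : I → Type u} [∀ i, TopologicalSpace (X i)]
    (hcov : ∀ i, ∃ U V : Set (X i), IsOpen U ∧ IsOpen V ∧
      U ≠ Set.univ ∧ V ≠ Set.univ ∧ U ≠ V ∧ U ∪ V = Set.univ)
    (hw : (⨆ i, Weight (X i)) ≤ #I) :
    (∃ B : Set (Set (∀ i, X i)), IsTopologicalBasis B ∧ OpLike ℵ₀ B) ∧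
    NoetherianType (∀ i, X i) = ℵ₀ := by
  classical
  have key : ∃ B : Set (Set (∀ i, X i)), IsTopologicalBasis B ∧ OpLike ℵ₀ B := by
    by_cases hI : Nonempty I
    · have hWmem : ∀ i, ℵ₀ ≤ Weight (X i) ∧
          ∃ B : Set (Set (X i)), IsTopologicalBasis B ∧ #B ≤ Weight (X i) := by
        intro i
        have hne : {κ : Cardinal.{u} | ℵ₀ ≤ κ ∧
            ∃ B : Set (Set (X i)), IsTopologicalBasis B ∧ #B ≤ κ}.Nonempty :=
          ⟨max ℵ₀ #(Set (X i)), le_max_left _ _, {U | IsOpen U}, isTopologicalBasis_opens,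
            le_trans (Cardinal.mk_set_le _) (le_max_right _ _)⟩
        exact csInf_mem hne
      have hWle : ∀ i, Weight (X i) ≤ #I := fun i =>
        le_trans (le_ciSup (Cardinal.bddAbove_range _) i) hw
      have hInf : ℵ₀ ≤ #I := le_trans (hWmem hI.some).1 (hWle hI.some)
      choose hℵ B hB hBcard using hWmem
      choose U V hUo hVo hU hV hUVne hUV using hcov
      exact aux_main hInf B hB (fun i => (hBcard i).trans (hWle i)) U V hUo hVo hU hV hUV
    · have hsub : Subsingleton (∀ i, X i) :=
        ⟨fun f g => funext fun i => absurd ⟨i⟩ hI⟩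
      refine ⟨{Set.univ}, ?_, ?_⟩
      · apply isTopologicalBasis_of_isOpen_of_nhds
        · rintro u rfl
          exact isOpen_univ
        · intro x O hxO hO
          exact ⟨Set.univ, rfl, Set.mem_univ x,
            fun y _ => by rwa [Subsingleton.elim y x]⟩
      · intro u hu
        exact ((Set.finite_singleton (Set.univ : Set (∀ i, X i))).subset
          fun V hV => hV.1).lt_aleph0
  obtain ⟨B, hB, hOp⟩ := key
  exact ⟨⟨B, hB, hOp⟩, le_antisymm (csInf_le' ⟨le_rfl, B, hB, hOp⟩)
    (le_csInf ⟨ℵ₀, le_rfl, B, hB, hOp⟩ fun κ hκ => hκ.1)⟩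
end

section
/- Let κ be a singular cardinal (an uncountable cardinal with cf(κ) < κ) and give the ordinal space κ+1 (the set of ordinals ≤ κ) the order topology. Then Nt(κ+1) = κ; that is, κ+1 has a κ^op-like base but no λ^op-like base for any infinite cardinal λ < κ. -/
open Cardinal Set TopologicalSpace

universe u

/-- The ordinal space `κ + 1`: the linear order of all ordinals `≤ κ`,
realized as the order type `κ.ord + 1`, with its order topology. -/
noncomputable instance (o : Ordinal.{u}) : TopologicalSpace o.ToType :=
  Preorder.topology o.ToType

instance (o : Ordinal.{u}) : OrderTopology o.ToType := ⟨rfl⟩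

/-!
Upper bound: fix `S` cofinal in `κ` with `|S| = cf κ < κ`, and take as base `{0}` together with
the intervals `(a, b]` such that `b` is a limit of `S` or `(a, b)` misses `S`. A basic superset
`(a', b']` of `(a, b]` has `a' ≤ a`, and `b'` is either one of the at most `cf κ + 1` limits of `S`
or bounded by the first point of `S` above `a`; as proper initial segments of `κ` have size `< κ`,
fewer than `κ` such supersets exist.

Lower bound: if `(←, q]` is open and `B` is a `λ`-op-like base, choose for each basic neighbourhood
`V` of `q` a left end `m V` with `(m V, q] ⊆ V`. These left ends are cofinal below `q`, while those
below any `b < q` all belong to sets `V` containing one fixed basic `U ⊆ (b, q]`, so there are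
fewer than `λ` of them; hence `cf q ≤ λ`. The point `λ⁺ ≤ κ` has cofinality `λ⁺ > λ`.
-/

open Order

theorem Order.cof_le_of_isCofinal_of_forall_mk_inter_Iic_lt {α : Type u} [LinearOrder α]
    {T : Set α} (hT : IsCofinal T) {c : Cardinal.{u}} (hc : ∀ b, #(T ∩ Iic b : Set α) < c) :
    cof α ≤ c := by
  by_contra! hlt
  obtain ⟨T₀, hT₀, hcard⟩ := le_mk_iff_exists_subset.1 (hlt.trans_le (cof_le hT)).le
  have hT₀_cof : ¬ IsCofinal T₀ := fun h => (hcard ▸ cof_le h).not_gt hlt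
  obtain ⟨b, hb⟩ := not_isCofinal_iff.1 hT₀_cof
  have hsub : T₀ ⊆ T ∩ Iic b := fun t ht => ⟨hT₀ ht, (hb t ht).le⟩
  exact (hcard ▸ mk_le_mk_of_subset hsub).not_gt (hc b)

section OrderTopology

variable {X : Type u} [LinearOrder X] [TopologicalSpace X] [OrderTopology X]

theorem SuccOrder.isOpen_Iic [SuccOrder X] (a : X) : IsOpen (Iic a) := by
  by_cases ha : IsMax a
  · rw [show Iic a = Set.univ from eq_univ_of_forall fun x => ha.isTop x]
    exact isOpen_univ
  · rw [← Iio_succ_of_not_isMax ha]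
    exact isOpen_Iio

theorem cof_Iio_le_of_opLike {B : Set (Set X)} (hB : IsTopologicalBasis B) {c : Cardinal.{u}}
    (hBc : OpLike c B) {q : X} (hq : IsOpen (Iic q)) : cof (Iio q) ≤ c := by
  rcases isEmpty_or_nonempty (Iio q) with _ | ⟨⟨l, hl⟩⟩
  · rw [cof_eq_zero]
    exact zero_le
  have hleft : ∀ V : {V ∈ B | q ∈ V}, ∃ x : Iio q, Ioc (x : X) q ⊆ V := fun V => by
    obtain ⟨x, hx, hsub⟩ := exists_Ioc_subset_of_mem_nhds
      ((hB.isOpen V.2.1).mem_nhds V.2.2) ⟨l, hl⟩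
    exact ⟨⟨x, hx⟩, hsub⟩
  choose m hm using hleft
  have hnbhd : ∀ b : Iio q, ∃ U ∈ B, q ∈ U ∧ U ⊆ Ioc (b : X) q := fun b =>
    hB.exists_subset_of_mem_open ⟨b.2, le_rfl⟩
      (Ioi_inter_Iic (a := (b : X)) ▸ isOpen_Ioi.inter hq)
  refine cof_le_of_isCofinal_of_forall_mk_inter_Iic_lt (T := range m) (fun b => ?_) (fun b => ?_)
  · obtain ⟨U, hUB, hqU, hUb⟩ := hnbhd b
    refine ⟨m ⟨U, hUB, hqU⟩, mem_range_self _, not_lt.1 fun hlt => ?_⟩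
    exact lt_irrefl _ (hUb (hm _ ⟨hlt, b.2.le⟩)).1
  · obtain ⟨U, hUB, hqU, hUb⟩ := hnbhd b
    have hsub : range m ∩ Iic b ⊆ m '' {V | U ⊆ V} := by
      rintro _ ⟨⟨V, rfl⟩, hVb⟩
      exact ⟨V, hUb.trans ((Ioc_subset_Ioc_left hVb).trans (hm V)), rfl⟩
    have hinj : #{V : {V ∈ B | q ∈ V} | U ⊆ V} ≤ #{V ∈ B | U ⊆ V} :=
      mk_le_of_injective (f := fun V => ⟨V.1.1, V.1.2.1, V.2⟩) fun V W h =>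
        Subtype.ext (Subtype.ext (congrArg Subtype.val h :))
    exact ((mk_le_mk_of_subset hsub).trans (mk_image_le.trans hinj)).trans_lt (hBc U hUB)

end OrderTopology

section AdaptedBasis

variable {X : Type u} [LinearOrder X]

def limitPoints (S : Set X) : Set X :=
  {c | ∀ x < c, (Ioo x c ∩ S).Nonempty}

def adaptedBasis (S : Set X) : Set (Set X) :=
  {U | ∃ x, IsMin x ∧ U = {x}} ∪
    {U | ∃ a b, a < b ∧ (b ∈ limitPoints S ∨ Ioo a b ∩ S = ∅) ∧ U = Ioc a b}

-- `c ↦ min (S ∩ (c, →))` is injective on the limit points of `S`.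
theorem mk_limitPoints_le [WellFoundedLT X] (S : Set X) : #(limitPoints S) ≤ #S + 1 := by
  classical
  let next : limitPoints S → Option S := fun c =>
    if h : (Ioi c.1 ∩ S).Nonempty then
      some (⟨wellFounded_lt.min (Ioi c.1 ∩ S) h, (wellFounded_lt.min_mem _ h).2⟩ : S)
    else none
  have next_ne : ∀ c d : limitPoints S, c.1 < d.1 → next c ≠ next d := by
    intro c d hcd
    obtain ⟨s, ⟨hcs, hsd⟩, hs⟩ := d.2 c.1 hcd
    have hsc : s ∈ Ioi c.1 ∩ S := ⟨hcs, hs⟩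
    have hc : (Ioi c.1 ∩ S).Nonempty := ⟨s, hsc⟩
    have hmin : wellFounded_lt.min _ hc < d.1 :=
      (not_lt.1 (wellFounded_lt.not_lt_min _ hsc)).trans_lt hsd
    simp only [next, dif_pos hc]
    split_ifs with hd
    · simp only [ne_eq, Option.some.injEq, Subtype.mk.injEq]
      exact (hmin.trans (wellFounded_lt.min_mem _ hd).1).ne
    · exact Option.some_ne_none _
  have hinj : Function.Injective next := fun c d h => by
    by_contra hne
    rcases lt_or_gt_of_ne (Subtype.coe_ne_coe.2 hne) with hlt | hlt
    exacts [next_ne c d hlt h, next_ne d c hlt h.symm]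
  simpa only [mk_option] using mk_le_of_injective hinj

theorem isTopologicalBasis_adaptedBasis [TopologicalSpace X] [OrderTopology X] [SuccOrder X]
    (S : Set X) : IsTopologicalBasis (adaptedBasis S) := by
  refine isTopologicalBasis_of_isOpen_of_nhds ?_ fun x u hxu hu => ?_
  · rintro _ (⟨x, hx, rfl⟩ | ⟨a, b, -, -, rfl⟩)
    · exact hx.Iic_eq ▸ SuccOrder.isOpen_Iic x
    · exact Ioi_inter_Iic (a := a) ▸ isOpen_Ioi.inter (SuccOrder.isOpen_Iic b)
  by_cases hx : IsMin x
  · exact ⟨{x}, Or.inl ⟨x, hx, rfl⟩, rfl, singleton_subset_iff.2 hxu⟩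
  obtain ⟨l, hl, hlu⟩ := exists_Ioc_subset_of_mem_nhds (hu.mem_nhds hxu) (not_isMin_iff.1 hx)
  by_cases hlim : x ∈ limitPoints S
  · exact ⟨Ioc l x, Or.inr ⟨l, x, hl, Or.inl hlim, rfl⟩, ⟨hl, le_rfl⟩, hlu⟩
  obtain ⟨y, hy, hyS⟩ : ∃ y < x, Ioo y x ∩ S = ∅ := by
    simpa [limitPoints, not_nonempty_iff_eq_empty] using hlim
  have hmiss : Ioo (max l y) x ∩ S = ∅ :=
    subset_empty_iff.1 (hyS ▸ inter_subset_inter_left _ (Ioo_subset_Ioo_left (le_max_right l y)))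
  exact ⟨Ioc (max l y) x, Or.inr ⟨max l y, x, max_lt hl hy, Or.inr hmiss, rfl⟩,
    ⟨max_lt hl hy, le_rfl⟩, (Ioc_subset_Ioc_left (le_max_left l y)).trans hlu⟩

theorem supersets_singleton_adaptedBasis_subset {S : Set X} {x : X} (hx : IsMin x) :
    {V ∈ adaptedBasis S | {x} ⊆ V} ⊆ {{x}} := by
  rintro _ ⟨⟨y, hy, rfl⟩ | ⟨a, b, -, -, rfl⟩, hxV⟩
  · rw [singleton_subset_singleton.1 hxV]
    rfl
  · exact (hx.not_lt (hxV rfl).1).elim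

theorem supersets_Ioc_adaptedBasis_subset {S : Set X} {a b s : X} (hab : a < b) (hs : s ∈ S)
    (has : a < s) :
    {V ∈ adaptedBasis S | Ioc a b ⊆ V} ⊆
      (fun p : X × X => Ioc p.1 p.2) '' (Iic a ×ˢ (limitPoints S ∪ Iic s)) := by
  rintro _ ⟨⟨y, hy, rfl⟩ | ⟨a', b', -, hadapt, rfl⟩, hsub⟩
  · exact (hy.not_lt ((hsub ⟨hab, le_rfl⟩ : b = y) ▸ hab)).elim
  obtain ⟨-, ha'a⟩ := (Ioc_subset_Ioc_iff hab).1 hsub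
  refine ⟨(a', b'), ⟨ha'a, hadapt.imp_right fun hmiss => not_lt.1 fun hsb' => ?_⟩, rfl⟩
  exact hmiss.subset ⟨⟨ha'a.trans_lt has, hsb'⟩, hs⟩

theorem opLike_adaptedBasis [WellFoundedLT X] [OrderTop X] {κ : Cardinal.{u}} (hκ : ℵ₀ ≤ κ)
    {S : Set X} (hS : #S < κ) (hS_cof : ∀ x < (⊤ : X), ∃ s ∈ S, x < s ∧ s < ⊤)
    (hsmall : ∀ x < (⊤ : X), #(Iic x) < κ) : OpLike κ (adaptedBasis S) := by
  rintro _ (⟨x, hx, rfl⟩ | ⟨a, b, hab, -, rfl⟩)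
  · exact (mk_le_mk_of_subset (supersets_singleton_adaptedBasis_subset hx)).trans_lt
      (mk_singleton _ ▸ one_lt_aleph0.trans_le hκ)
  obtain ⟨s, hs, has, hs_top⟩ := hS_cof a (hab.trans_le le_top)
  have hlim : #(limitPoints S ∪ Iic s : Set X) < κ :=
    (mk_union_le _ _).trans_lt <| add_lt_of_lt hκ
      ((mk_limitPoints_le S).trans_lt (add_lt_of_lt hκ hS (one_lt_aleph0.trans_le hκ)))
      (hsmall s hs_top)
  calc #{V ∈ adaptedBasis S | Ioc a b ⊆ V}
      ≤ #(Iic a ×ˢ (limitPoints S ∪ Iic s)) :=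
        (mk_le_mk_of_subset (supersets_Ioc_adaptedBasis_subset hab hs has)).trans mk_image_le
    _ = #(Iic a) * #(limitPoints S ∪ Iic s : Set X) := mk_setProd _ _
    _ < κ := mul_lt_of_lt hκ (hsmall a (has.trans hs_top)) hlim

theorem exists_opLike_isTopologicalBasis [WellFoundedLT X] [OrderTop X] [TopologicalSpace X]
    [OrderTopology X] [SuccOrder X] {κ : Cardinal.{u}} (hκ : ℵ₀ ≤ κ)
    (htop : IsSuccLimit (⊤ : X)) (hcof : cof (Iio (⊤ : X)) < κ)
    (hsmall : ∀ x < (⊤ : X), #(Iic x) < κ) :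
    ∃ B : Set (Set X), IsTopologicalBasis B ∧ OpLike κ B := by
  obtain ⟨T, hT, hTcard⟩ := exists_cof_eq (Iio (⊤ : X))
  have hS_cof : ∀ x < (⊤ : X), ∃ s ∈ Subtype.val '' T, x < s ∧ s < ⊤ := fun x hx => by
    obtain ⟨t, ht, hxt⟩ := hT ⟨succ x, htop.succ_lt hx⟩
    exact ⟨t, mem_image_of_mem _ ht, (lt_succ_of_not_isMax hx.not_isMax).trans_le hxt, t.2⟩
  exact ⟨_, isTopologicalBasis_adaptedBasis _,
    opLike_adaptedBasis hκ (mk_image_le.trans_lt (hTcard ▸ hcof)) hS_cof hsmall⟩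

end AdaptedBasis

theorem noetherianType_eq_of_opLike_of_forall_lt {X : Type u} [TopologicalSpace X]
    {κ : Cardinal.{u}} (hκ : ℵ₀ ≤ κ)
    (hbase : ∃ B : Set (Set X), IsTopologicalBasis B ∧ OpLike κ B)
    (hno : ∀ c : Cardinal.{u}, ℵ₀ ≤ c → c < κ →
      ¬ ∃ B : Set (Set X), IsTopologicalBasis B ∧ OpLike c B) :
    NoetherianType X = κ :=
  le_antisymm (csInf_le' ⟨hκ, hbase⟩) <| le_csInf ⟨κ, hκ, hbase⟩ fun c ⟨hc, hcB⟩ =>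
    not_lt.1 fun hlt => hno c hc hlt hcB

namespace Ordinal

theorem typein_top_toType_succ (o : Ordinal.{u}) :
    typein (α := (succ o).ToType) (· < ·) ⊤ = o :=
  typein_enum _ _

theorem isSuccLimit_top_toType_succ {o : Ordinal.{u}} (ho : IsSuccLimit o) :
    IsSuccLimit (⊤ : (succ o).ToType) := by
  rwa [← (typein (α := (succ o).ToType) (· < ·)).isSuccLimit_apply_iff, typein_top_toType_succ]

theorem cof_Iio_top_toType_succ (o : Ordinal.{u}) :
    Order.cof (Iio (⊤ : (succ o).ToType)) = o.cof := by
  rw [Order.cof_Iio, typein_top_toType_succ]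

theorem exists_cof_Iio_toType_succ_eq {o β : Ordinal.{u}} (hβ : β ≤ o) :
    ∃ q : (succ o).ToType, Order.cof (Iio q) = β.cof := by
  have hβ' : β < typeLT (succ o).ToType := (type_toType _).symm ▸ lt_succ_iff.2 hβ
  exact ⟨enum (· < ·) ⟨β, hβ'⟩, by rw [Order.cof_Iio, typein_enum]⟩

theorem mk_Iic_lt_of_lt_top {κ : Cardinal.{u}} (hκ : ℵ₀ ≤ κ) {x : (succ κ.ord).ToType}
    (hx : x < ⊤) : #(Iic x) < κ := by
  have htop := isSuccLimit_top_toType_succ (isSuccLimit_ord hκ)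
  rw [← Iio_succ_of_not_isMax hx.not_isMax]
  have hlt := (typein (α := (succ κ.ord).ToType) (· < ·)).lt_iff_lt.2 (htop.succ_lt hx)
  rw [typein_top_toType_succ] at hlt
  exact lt_ord.1 hlt

end Ordinal

/-- If `κ` is a singular cardinal, then the ordinal space `κ + 1` has
Noetherian type `κ`: it has a `κ`-op-like base but no `λ`-op-like base for any
infinite `λ < κ`. -/
theorem statement12 (κ : Cardinal.{u}) (hinf : ℵ₀ ≤ κ) (hsing : κ.ord.cof < κ) :
    NoetherianType (Order.succ κ.ord).ToType = κ ∧
    (∃ B : Set (Set (Order.succ κ.ord).ToType), IsTopologicalBasis B ∧ OpLike κ B) ∧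
    ∀ lam : Cardinal.{u}, ℵ₀ ≤ lam → lam < κ →
      ¬ ∃ B : Set (Set (Order.succ κ.ord).ToType), IsTopologicalBasis B ∧ OpLike lam B := by
  have hbase : ∃ B : Set (Set (succ κ.ord).ToType), IsTopologicalBasis B ∧ OpLike κ B :=
    exists_opLike_isTopologicalBasis hinf
      (Ordinal.isSuccLimit_top_toType_succ (isSuccLimit_ord hinf))
      (Ordinal.cof_Iio_top_toType_succ κ.ord ▸ hsing) fun _ => Ordinal.mk_Iic_lt_of_lt_top hinf
  have hno : ∀ lam : Cardinal.{u}, ℵ₀ ≤ lam → lam < κ →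
      ¬ ∃ B : Set (Set (succ κ.ord).ToType), IsTopologicalBasis B ∧ OpLike lam B := by
    rintro lam hlam hlt ⟨B, hB, hBlam⟩
    obtain ⟨q, hq⟩ := Ordinal.exists_cof_Iio_toType_succ_eq (ord_le_ord.2 (succ_le_of_lt hlt))
    have hcof := cof_Iio_le_of_opLike hB hBlam (SuccOrder.isOpen_Iic q)
    rw [hq, (isRegular_succ hlam).cof_ord] at hcof
    exact (lt_succ lam).not_ge hcof
  exact ⟨noetherianType_eq_of_opLike_of_forall_lt hinf hbase hno, hbase, hno⟩
end

section
/- Let κ be a regular uncountable cardinal and let X be the set {(α, n) : α < κ, n ∈ ℤ} ∪ {(κ, 0)} ⊆ (κ+1) × ℤ, ordered lexicographically and given the order topology of this linear order. Then X is a κ-compact linearly ordered topological space and Nt(X) = κ; that is, X has a κ^op-like base but no λ^op-like base for any infinite cardinal λ < κ. In particular, for κ = ω₁ this X is a Lindelöf, nonseparable linearly ordered topological space with Noetherian type ω₁. -/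
open Cardinal Set TopologicalSpace

universe u

/-- The space `(κ × ℤ) ∪ {(κ, 0)} ⊆ (κ+1) × ℤ`, ordered lexicographically:
points of `(κ+1) ×ₗ ℤ` whose first coordinate is not the top point `κ`, or
whose second coordinate is `0`. -/
def KappaSpace (κ : Cardinal.{u}) : Type u :=
  {p : (Order.succ κ.ord).ToType ×ₗ ℤ // ¬ IsMax (ofLex p).1 ∨ (ofLex p).2 = 0}

noncomputable instance (κ : Cardinal.{u}) : LinearOrder (KappaSpace κ) := by
  unfold KappaSpace; infer_instance

/-- `KappaSpace κ` carries the order topology of its lexicographic order, so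
it is a linearly ordered topological space. -/
noncomputable instance (κ : Cardinal.{u}) : TopologicalSpace (KappaSpace κ) :=
  Preorder.topology (KappaSpace κ)

instance (κ : Cardinal.{u}) : OrderTopology (KappaSpace κ) := ⟨rfl⟩


/-!
Every point of `KappaSpace κ` other than its top point `⊤` is isolated, since its integer
coordinate can move by one in either direction, and the isolated points below any `y < ⊤` are
fewer than `κ`. The base made of those singletons and the final segments `Ioi y` is therefore
`κ`-op-like, and one neighbourhood of `⊤` leaves fewer than `κ` points to cover, whence
`κ`-compactness. Conversely, by regularity any fewer than `κ` neighbourhoods of `⊤` all contain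
a common isolated point `y`, while every base has at least `κ` members containing `⊤`; so `{y}`,
which lies in every base, has at least `λ` supersets in it for each `λ < κ`.
-/

open Filter Topology

theorem isOpen_singleton_of_covBy {X : Type*} [LinearOrder X] [TopologicalSpace X]
    [OrderTopology X] {a x b : X} (ha : a ⋖ x) (hb : x ⋖ b) : IsOpen ({x} : Set X) := by
  rw [isOpen_singleton_iff_nhds_eq_pure, ← nhdsLE_sup_nhdsGE, ha.nhdsLE, hb.nhdsGE, sup_idem]

theorem TopologicalSpace.IsTopologicalBasis.singleton_mem {X : Type*} [TopologicalSpace X]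
    {B : Set (Set X)} (hB : IsTopologicalBasis B) {x : X} (hx : IsOpen ({x} : Set X)) :
    {x} ∈ B := by
  obtain ⟨V, hVB, hxV, hVx⟩ := hB.exists_subset_of_mem_open (mem_singleton x) hx
  rwa [← Subset.antisymm hVx (singleton_subset_iff.2 hxV)]

theorem MuCompact.lindelofSpace {X : Type u} [TopologicalSpace X] (h : MuCompact (aleph 1) X) :
    LindelofSpace X := by
  refine ⟨isLindelof_of_countable_subcover fun U hU hcov => ?_⟩
  obtain ⟨𝒱, h𝒱U, h𝒱, h𝒱cov⟩ := h (range U) (forall_mem_range.2 hU)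
    (by rw [sUnion_range]; exact univ_subset_iff.1 hcov)
  have : Countable 𝒱 := (le_aleph0_iff_set_countable.1 (lt_aleph_one_iff.1 h𝒱)).to_subtype
  choose i hi using fun V : 𝒱 => h𝒱U V.2
  refine ⟨range i, countable_range i, fun x _ => ?_⟩
  obtain ⟨V, hV, hxV⟩ := h𝒱cov.symm ▸ mem_univ x
  exact mem_biUnion (mem_range_self ⟨V, hV⟩) ((hi ⟨V, hV⟩).symm ▸ hxV)

theorem noetherianType_eq {X : Type u} [TopologicalSpace X] {κ : Cardinal.{u}} (hκ : ℵ₀ ≤ κ)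
    (hB : ∃ B : Set (Set X), IsTopologicalBasis B ∧ OpLike κ B)
    (hsmall : ∀ lam < κ, ∀ B : Set (Set X), IsTopologicalBasis B → ¬ OpLike lam B) :
    NoetherianType X = κ :=
  le_antisymm (csInf_le' ⟨hκ, hB⟩) <| le_csInf ⟨κ, hκ, hB⟩
    fun _ ⟨_, B, hB, hop⟩ => not_lt.1 fun hlt => hsmall _ hlt B hB hop

section SingletonIoiBase

variable {X : Type u} [LinearOrder X] [OrderTop X]

def singletonIoiBase (X : Type u) [LinearOrder X] [OrderTop X] : Set (Set X) :=
  ((fun x => {x}) '' Iio ⊤) ∪ (Ioi '' Iio ⊤)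

theorem exists_supersets_subset_singletonIoiBase {U : Set X} (hU : U ∈ singletonIoiBase X) :
    ∃ y < ⊤, {V ∈ singletonIoiBase X | U ⊆ V} ⊆
      ((fun x => {x}) '' Iic y) ∪ (Ioi '' Iic y) := by
  rcases hU with ⟨y, hy, rfl⟩ | ⟨y, hy, rfl⟩ <;> refine ⟨y, hy, ?_⟩ <;>
    rintro _ ⟨⟨z, hz, rfl⟩ | ⟨z, -, rfl⟩, hsub⟩
  · exact Or.inl ⟨z, (singleton_subset_singleton.1 hsub).ge, rfl⟩
  · exact Or.inr ⟨z, (hsub rfl).le, rfl⟩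
  · exact absurd (hsub hy) hz.ne'
  · exact Or.inr ⟨z, not_lt.1 fun hyz => lt_irrefl z (hsub hyz), rfl⟩

variable {κ : Cardinal.{u}}

theorem opLike_singletonIoiBase (hκ : ℵ₀ ≤ κ) (hsmall : ∀ x < (⊤ : X), #(Iic x) < κ) :
    OpLike κ (singletonIoiBase X) := by
  intro U hU
  obtain ⟨y, hy, hsub⟩ := exists_supersets_subset_singletonIoiBase hU
  calc #{V ∈ singletonIoiBase X | U ⊆ V}
      _ ≤ #(((fun x => {x}) '' Iic y) ∪ (Ioi '' Iic y) : Set (Set X)) := mk_le_mk_of_subset hsub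
      _ ≤ #(Iic y) + #(Iic y) := (mk_union_le _ _).trans (add_le_add mk_image_le mk_image_le)
      _ < κ := add_lt_of_lt hκ (hsmall y hy) (hsmall y hy)

variable [TopologicalSpace X]

theorem le_mk_of_dense (hiso : ∀ x < (⊤ : X), IsOpen {x})
    (hbdd : ∀ S ⊆ Iio (⊤ : X), #S < κ → ∃ y < ⊤, ∀ s ∈ S, s < y) {D : Set X} (hD : Dense D) :
    κ ≤ #D := by
  by_contra! h
  have hsub : Iio ⊤ ⊆ D := fun x hx => by
    obtain ⟨_, rfl, hxD⟩ := hD.inter_open_nonempty {x} (hiso x hx) (singleton_nonempty x)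
    exact hxD
  obtain ⟨y, hy, hyy⟩ := hbdd (Iio ⊤) subset_rfl ((mk_le_mk_of_subset hsub).trans_lt h)
  exact lt_irrefl y (hyy y hy)

theorem not_separableSpace (hiso : ∀ x < (⊤ : X), IsOpen {x})
    (hbdd : ∀ S ⊆ Iio (⊤ : X), #S < κ → ∃ y < ⊤, ∀ s ∈ S, s < y) (hκ : ℵ₀ < κ) :
    ¬ SeparableSpace X := by
  rintro ⟨D, hDc, hD⟩
  exact (le_mk_of_dense hiso hbdd hD).not_gt (le_aleph0_iff_set_countable.2 hDc |>.trans_lt hκ)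

variable [OrderTopology X]

theorem isTopologicalBasis_singletonIoiBase [Nontrivial X] (hiso : ∀ x < (⊤ : X), IsOpen {x}) :
    IsTopologicalBasis (singletonIoiBase X) := by
  refine isTopologicalBasis_of_isOpen_of_nhds ?_ fun a U ha hU => ?_
  · rintro _ (⟨x, hx, rfl⟩ | ⟨y, -, rfl⟩)
    exacts [hiso x hx, isOpen_Ioi]
  · rcases (le_top : a ≤ ⊤).lt_or_eq with ha' | rfl
    · exact ⟨{a}, Or.inl ⟨a, ha', rfl⟩, rfl, singleton_subset_iff.2 ha⟩
    · obtain ⟨l, hl, hlU⟩ := nhds_top_basis.mem_iff.1 (hU.mem_nhds ha)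
      exact ⟨Ioi l, Or.inr ⟨l, hl, rfl⟩, hl, hlU⟩

theorem muCompact_of_mk_Iic_lt [Nontrivial X] (hκ : ℵ₀ ≤ κ)
    (hsmall : ∀ x < (⊤ : X), #(Iic x) < κ) : MuCompact κ X := by
  intro 𝒰 hopen hcov
  choose F hF𝒰 hxF using fun x : X => mem_sUnion.1 (hcov.symm ▸ mem_univ x)
  obtain ⟨l, hl, hlF⟩ := nhds_top_basis.mem_iff.1 ((hopen _ (hF𝒰 ⊤)).mem_nhds (hxF ⊤))
  refine ⟨insert (F ⊤) (F '' Iic l), insert_subset (hF𝒰 ⊤) (image_subset_iff.2 fun x _ => hF𝒰 x),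
    ?_, eq_univ_of_forall fun x => ?_⟩
  · calc #(insert (F ⊤) (F '' Iic l) : Set (Set X))
        _ ≤ #(F '' Iic l) + 1 := mk_insert_le
        _ ≤ #(Iic l) + 1 := add_le_add_left mk_image_le 1
        _ < κ := add_lt_of_lt hκ (hsmall l hl) (one_lt_aleph0.trans_le hκ)
  · rcases le_or_gt x l with hxl | hlx
    · exact ⟨F x, mem_insert_of_mem _ ⟨x, hxl, rfl⟩, hxF x⟩
    · exact ⟨F ⊤, mem_insert _ _, hlF hlx⟩

theorem exists_lt_top_forall_mem [Nontrivial X]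
    (hbdd : ∀ S ⊆ Iio (⊤ : X), #S < κ → ∃ y < ⊤, ∀ s ∈ S, s < y) {𝒮 : Set (Set X)}
    (h𝒮 : ∀ V ∈ 𝒮, V ∈ 𝓝 ⊤) (hcard : #𝒮 < κ) : ∃ y < ⊤, ∀ V ∈ 𝒮, y ∈ V := by
  choose L hL hLV using fun V : 𝒮 => nhds_top_basis.mem_iff.1 (h𝒮 V V.2)
  obtain ⟨y, hy, hLy⟩ := hbdd (range L) (range_subset_iff.2 hL) (mk_range_le.trans_lt hcard)
  exact ⟨y, hy, fun V hV => hLV ⟨V, hV⟩ (hLy _ (mem_range_self _))⟩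

theorem le_mk_setOf_top_mem [Nontrivial X]
    (hbdd : ∀ S ⊆ Iio (⊤ : X), #S < κ → ∃ y < ⊤, ∀ s ∈ S, s < y) {B : Set (Set X)}
    (hB : IsTopologicalBasis B) : κ ≤ #{V ∈ B | ⊤ ∈ V} := by
  by_contra! h
  obtain ⟨y, hy, hyV⟩ :=
    exists_lt_top_forall_mem hbdd (fun V hV => (hB.isOpen hV.1).mem_nhds hV.2) h
  obtain ⟨V, hVB, htop, hVy⟩ := hB.exists_subset_of_mem_open (mem_Ioi.2 hy) isOpen_Ioi
  exact lt_irrefl y (hVy (hyV V ⟨hVB, htop⟩))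

theorem not_opLike_of_lt [Nontrivial X] (hiso : ∀ x < (⊤ : X), IsOpen {x})
    (hbdd : ∀ S ⊆ Iio (⊤ : X), #S < κ → ∃ y < ⊤, ∀ s ∈ S, s < y) {B : Set (Set X)}
    (hB : IsTopologicalBasis B) {lam : Cardinal.{u}} (hlam : lam < κ) : ¬ OpLike lam B := by
  intro hop
  obtain ⟨𝒮, h𝒮N, h𝒮⟩ := le_mk_iff_exists_subset.1 (hlam.le.trans (le_mk_setOf_top_mem hbdd hB))
  obtain ⟨y, hy, hy𝒮⟩ := exists_lt_top_forall_mem hbdd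
    (fun V hV => (hB.isOpen (h𝒮N hV).1).mem_nhds (h𝒮N hV).2) (h𝒮.trans_lt hlam)
  have h𝒮y : 𝒮 ⊆ {V ∈ B | {y} ⊆ V} := fun V hV => ⟨(h𝒮N hV).1, singleton_subset_iff.2 (hy𝒮 V hV)⟩
  exact (h𝒮 ▸ mk_le_mk_of_subset h𝒮y).not_gt (hop {y} (hB.singleton_mem (hiso y hy)))

end SingletonIoiBase

theorem Ordinal.lt_toType_mk_iff {o : Ordinal.{u}} {a : o.ToType} {b : Iio o} :
    a < ToType.mk b ↔ typein (α := o.ToType) (· < ·) a < b := by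
  rw [← ToType.mk.symm.lt_iff_lt, OrderIso.symm_apply_apply]
  exact Iff.rfl

theorem Ordinal.typein_lt_iff_lt_top {o : Ordinal.{u}} {a : (Order.succ o).ToType} :
    typein (α := (Order.succ o).ToType) (· < ·) a < o ↔ a < ⊤ :=
  (lt_toType_mk_iff (b := ⟨o, mem_Iio.2 (Order.lt_succ o)⟩)).symm

theorem Prod.Lex.mk_Iic_le {α β : Type*} [LinearOrder α] [LinearOrder β] (p : α ×ₗ β) :
    #(Iic p) ≤ #(Iic (ofLex p).1 × β) := by
  refine mk_le_of_injective
    (f := fun z => (⟨(ofLex z.1).1, Prod.Lex.monotone_fst _ _ z.2⟩, (ofLex z.1).2)) ?_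
  intro z w h
  simp only [Prod.mk.injEq] at h
  exact Subtype.ext (ofLex.injective (Prod.ext (congrArg Subtype.val h.1) h.2))

namespace KappaSpace

variable {κ : Cardinal.{u}}

noncomputable instance : OrderTop (KappaSpace κ) where
  top := ⟨toLex (⊤, 0), Or.inr rfl⟩
  le_top := by
    rintro ⟨p, hp⟩
    refine Prod.Lex.le_iff.2 ((le_top : (ofLex p).1 ≤ ⊤).lt_or_eq.imp id fun h => ⟨h, ?_⟩)
    exact (hp.resolve_left (not_not_intro (h ▸ isMax_top))).le

theorem lt_top_iff {x : KappaSpace κ} : x < ⊤ ↔ (ofLex x.1).1 < ⊤ := by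
  refine ⟨fun hx => le_top.lt_of_ne fun h => hx.ne ?_, fun h => Prod.Lex.lt_iff.2 (Or.inl h)⟩
  exact Subtype.ext (ofLex.injective
    (Prod.ext h (x.2.resolve_left (not_not_intro (h ▸ isMax_top)))))

noncomputable def mk (a : (Order.succ κ.ord).ToType) (ha : a < ⊤) (n : ℤ) : KappaSpace κ :=
  ⟨toLex (a, n), Or.inl ha.not_isMax⟩

theorem mk_covBy_mk {a : (Order.succ κ.ord).ToType} (ha : a < ⊤) {m n : ℤ} (h : m ⋖ n) :
    mk a ha m ⋖ mk a ha n :=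
  CovBy.of_image (OrderEmbedding.subtype _) (Prod.Lex.toLex_covBy_toLex_iff.2 (Or.inl ⟨rfl, h⟩))

theorem isOpen_singleton {x : KappaSpace κ} (hx : x < ⊤) : IsOpen ({x} : Set (KappaSpace κ)) :=
  isOpen_singleton_of_covBy (mk_covBy_mk (lt_top_iff.1 hx) (Order.sub_one_covBy _))
    (mk_covBy_mk (lt_top_iff.1 hx) (Order.covBy_add_one _))

theorem mk_Iic_lt (hκ : ℵ₀ < κ) {x : KappaSpace κ} (hx : x < ⊤) : #(Iic x) < κ := by
  have hfst : #(Iic (ofLex x.1).1) < κ := by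
    rw [← Iio_insert]
    refine mk_insert_le.trans_lt (add_lt_of_lt hκ.le ?_ (one_lt_aleph0.trans hκ))
    have := lt_ord.1 (Ordinal.typein_lt_iff_lt_top.2 (lt_top_iff.1 hx))
    rwa [Ordinal.card_typein] at this
  calc #(Iic x)
      _ = #(Subtype.val '' Iic x) := (mk_image_eq Subtype.val_injective).symm
      _ ≤ #(Iic x.1) := mk_le_mk_of_subset (image_subset_iff.2 fun _ h => h)
      _ ≤ #(Iic (ofLex x.1).1 × ℤ) := Prod.Lex.mk_Iic_le _
      _ = #(Iic (ofLex x.1).1) * ℵ₀ := by simp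
      _ < κ := mul_lt_of_lt hκ.le hfst hκ

theorem exists_lt_top_forall_lt (hreg : κ.IsRegular) (S : Set (KappaSpace κ)) (hS : S ⊆ Iio ⊤)
    (hcard : #S < κ) : ∃ y < ⊤, ∀ s ∈ S, s < y := by
  let f (s : S) : Ordinal :=
    Order.succ (Ordinal.typein (α := (Order.succ κ.ord).ToType) (· < ·) (ofLex s.1.1).1)
  have ho : ⨆ s, f s < κ.ord := Ordinal.iSup_lt_of_lt_cof (by rwa [hreg.cof_ord]) fun s =>
    (isSuccLimit_ord hreg.aleph0_le).succ_lt
      (Ordinal.typein_lt_iff_lt_top.2 (lt_top_iff.1 (hS s.2)))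
  let a : (Order.succ κ.ord).ToType := Ordinal.ToType.mk ⟨⨆ s, f s, ho.trans (Order.lt_succ _)⟩
  have ha : a < ⊤ := show a < Ordinal.ToType.mk ⟨κ.ord, mem_Iio.2 (Order.lt_succ _)⟩ from
    Ordinal.ToType.mk.lt_iff_lt.2 ho
  refine ⟨mk a ha 0, lt_top_iff.2 ha, fun s hs => Prod.Lex.lt_iff.2 (Or.inl ?_)⟩
  exact Ordinal.lt_toType_mk_iff.2 ((Order.lt_succ _).trans_le (Ordinal.le_iSup f ⟨s, hs⟩))

end KappaSpace

/-- For a regular uncountable cardinal `κ`, the lexicographic space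
`(κ × ℤ) ∪ {(κ, 0)}` is a `κ`-compact linearly ordered topological space with
Noetherian type `κ`: it has a `κ`-op-like base but no `λ`-op-like base for any
infinite `λ < κ`.  In particular, for `κ = ω₁` it is a Lindelöf, nonseparable
linearly ordered topological space with Noetherian type `ω₁`. -/
theorem statement15 (κ : Cardinal.{u}) (hreg : κ.IsRegular) (hunc : ℵ₀ < κ) :
    MuCompact κ (KappaSpace κ) ∧
    NoetherianType (KappaSpace κ) = κ ∧
    (∃ B : Set (Set (KappaSpace κ)), IsTopologicalBasis B ∧ OpLike κ B) ∧
    (∀ lam : Cardinal.{u}, ℵ₀ ≤ lam → lam < κ →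
      ¬ ∃ B : Set (Set (KappaSpace κ)), IsTopologicalBasis B ∧ OpLike lam B) ∧
    (κ = Cardinal.aleph 1 →
      LindelofSpace (KappaSpace κ) ∧ ¬ TopologicalSpace.SeparableSpace (KappaSpace κ)) := by
  have hiso : ∀ x < (⊤ : KappaSpace κ), IsOpen {x} := fun _ => KappaSpace.isOpen_singleton
  have hsmall : ∀ x < (⊤ : KappaSpace κ), #(Iic x) < κ := fun _ => KappaSpace.mk_Iic_lt hunc
  have hbdd := KappaSpace.exists_lt_top_forall_lt hreg
  obtain ⟨y, hy, -⟩ := hbdd ∅ (empty_subset _) (by simpa using hreg.pos)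
  have : Nontrivial (KappaSpace κ) := nontrivial_of_lt y ⊤ hy
  have hbase : ∃ B : Set (Set (KappaSpace κ)), IsTopologicalBasis B ∧ OpLike κ B :=
    ⟨_, isTopologicalBasis_singletonIoiBase hiso, opLike_singletonIoiBase hreg.aleph0_le hsmall⟩
  have hnot : ∀ lam < κ, ∀ B : Set (Set (KappaSpace κ)), IsTopologicalBasis B → ¬ OpLike lam B :=
    fun _ hlam _ hB => not_opLike_of_lt hiso hbdd hB hlam
  have hcompact := muCompact_of_mk_Iic_lt hreg.aleph0_le hsmall
  refine ⟨hcompact, noetherianType_eq hreg.aleph0_le hbase hnot, hbase,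
    fun lam _ hlam ⟨B, hB, hop⟩ => hnot lam hlam B hB hop,
    fun hκ => ⟨MuCompact.lindelofSpace (by rwa [← hκ]), not_separableSpace hiso hbdd hunc⟩⟩
end

section
/- If X = ∏_{i∈I} X_i is a product of GO-spaces with |I| ≤ d(X), then πw(X) = d(X). -/
open Cardinal Set TopologicalSpace

universe u

lemma gen_open_interval {Z : Type u} [LinearOrder Z] {W : Set Z}
    (hW : TopologicalSpace.GenerateOpen {s : Set Z | ∃ a, s = Set.Ioi a ∨ s = Set.Iio a} W) :
    ∀ z ∈ W, ∃ (l : WithBot Z) (u : WithTop Z), l < (z : WithBot Z) ∧ ((z : WithTop Z) < u) ∧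
      ∀ x : Z, l < (x : WithBot Z) → ((x : WithTop Z) < u) → x ∈ W := by
  induction hW with
  | basic s hs =>
      obtain ⟨a, h | h⟩ := hs <;> subst h <;> intro z hz
      · exact ⟨a, ⊤, WithBot.coe_lt_coe.2 hz, WithTop.coe_lt_top z,
          fun x hx _ => WithBot.coe_lt_coe.1 hx⟩
      · exact ⟨⊥, a, WithBot.bot_lt_coe z, WithTop.coe_lt_coe.2 hz,
          fun x _ hx => WithTop.coe_lt_coe.1 hx⟩
  | univ => intro z _; exact ⟨⊥, ⊤, WithBot.bot_lt_coe z, WithTop.coe_lt_top z, fun _ _ _ => trivial⟩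
  | inter s t hs ht ihs iht =>
      intro z hz
      obtain ⟨l1, u1, hl1, hu1, h1⟩ := ihs z hz.1
      obtain ⟨l2, u2, hl2, hu2, h2⟩ := iht z hz.2
      exact ⟨max l1 l2, min u1 u2, max_lt hl1 hl2, lt_min hu1 hu2,
        fun x hx hx' => ⟨h1 x (lt_of_le_of_lt (le_max_left _ _) hx) (lt_of_lt_of_le hx' (min_le_left _ _)),
          h2 x (lt_of_le_of_lt (le_max_right _ _) hx) (lt_of_lt_of_le hx' (min_le_right _ _))⟩⟩
  | sUnion S hS ih =>
      intro z hz
      obtain ⟨t, htS, hzt⟩ := hz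
      obtain ⟨l, u, h1, h2, h3⟩ := ih t htS z hzt
      exact ⟨l, u, h1, h2, fun x hx hx' => ⟨t, htS, h3 x hx hx'⟩⟩

lemma go_pibase {X : Type u} [LinearOrder X] [tX : TopologicalSpace X]
    (hGO : IsGOSpace X) {D : Set X} (hD : Dense D) :
    ∃ B : Set (Set X), IsPiBase B ∧ #B ≤ max ℵ₀ #D := by
  classical
  obtain ⟨Y, lo, e, he, ht⟩ := hGO
  letI : LinearOrder Y := lo
  set sub : Set (Set Y) := {s | ∃ a, s = Ioi a ∨ s = Iio a} with hsub
  have hopen : ∀ U : Set X, IsOpen U ↔ ∃ W : Set Y,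
      TopologicalSpace.GenerateOpen sub W ∧ e ⁻¹' W = U := by
    intro U; rw [show tX = _ from ht]; exact Iff.rfl
  have hIoi : ∀ a : X, IsOpen (Ioi a) := fun a =>
    (hopen _).2 ⟨Ioi (e a), .basic _ ⟨e a, Or.inl rfl⟩, by ext x; simp [he.lt_iff_lt]⟩
  have hIio : ∀ a : X, IsOpen (Iio a) := fun a =>
    (hopen _).2 ⟨Iio (e a), .basic _ ⟨e a, Or.inr rfl⟩, by ext x; simp [he.lt_iff_lt]⟩
  set f : (↥D × ↥D) ⊕ ↥D → Set X :=
    fun p => Sum.rec (fun q => Ioo (q.1 : X) (q.2 : X)) (fun d => {(d : X)}) p with hf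
  refine ⟨Set.range f ∩ {S | IsOpen S ∧ S.Nonempty}, ⟨fun U hU => hU.2, ?_⟩, ?_⟩
  · rintro U hU ⟨x, hx⟩
    obtain ⟨W, hW, rfl⟩ := (hopen U).1 hU
    obtain ⟨l, u, hl, hu, hint⟩ := gen_open_interval hW (e x) hx
    set C : Set X := {p : X | l < (e p : WithBot Y) ∧ ((e p : WithTop Y) < u)} with hC
    have hCx : x ∈ C := ⟨hl, hu⟩
    have hCU : C ⊆ e ⁻¹' W := fun p hp => hint (e p) hp.1 hp.2
    have hseg : TopologicalSpace.GenerateOpen sub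
        {y : Y | l < (y : WithBot Y) ∧ ((y : WithTop Y) < u)} := by
      induction l using WithBot.recBotCoe with
      | bot =>
          induction u using WithTop.recTopCoe with
          | top =>
              have : {y : Y | (⊥ : WithBot Y) < (y : WithBot Y) ∧ ((y : WithTop Y) < ⊤)} = Set.univ := by
                ext y; simp [WithBot.bot_lt_coe, WithTop.coe_lt_top]
              rw [this]; exact .univ
          | coe b =>
              have : {y : Y | (⊥ : WithBot Y) < (y : WithBot Y) ∧ ((y : WithTop Y) < (b : WithTop Y))} = Iio b := by
                ext y; simp [WithBot.bot_lt_coe]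
              rw [this]; exact .basic _ ⟨b, Or.inr rfl⟩
      | coe a =>
          induction u using WithTop.recTopCoe with
          | top =>
              have : {y : Y | ((a : WithBot Y) < (y : WithBot Y)) ∧ ((y : WithTop Y) < ⊤)} = Ioi a := by
                ext y; simp [WithTop.coe_lt_top]
              rw [this]; exact .basic _ ⟨a, Or.inl rfl⟩
          | coe b =>
              have : {y : Y | ((a : WithBot Y) < (y : WithBot Y)) ∧ ((y : WithTop Y) < (b : WithTop Y))} = Ioi a ∩ Iio b := by
                ext y; simp
              rw [this]; exact .inter _ _ (.basic _ ⟨a, Or.inl rfl⟩) (.basic _ ⟨b, Or.inr rfl⟩)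
    have hCopen : IsOpen C := (hopen C).2 ⟨_, hseg, rfl⟩
    have hconv : ∀ p q r : X, p ∈ C → r ∈ C → p ≤ q → q ≤ r → q ∈ C := fun p q r hp hr hpq hqr =>
      ⟨lt_of_lt_of_le hp.1 (WithBot.coe_le_coe.2 (he.monotone hpq)),
        lt_of_le_of_lt (WithTop.coe_le_coe.2 (he.monotone hqr)) hr.2⟩
    have hsingleton : ∀ w : X, w ∈ C → IsOpen ({w} : Set X) → ∃ V ∈ Set.range f ∩ {S | IsOpen S ∧ S.Nonempty}, V ⊆ e ⁻¹' W := by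
      intro w hwC how
      have hwD : w ∈ D := by
        obtain ⟨z, hz1, hz2⟩ := hD.inter_open_nonempty _ how ⟨w, rfl⟩
        rcases hz1 with rfl; exact hz2
      exact ⟨{w}, ⟨⟨Sum.inr ⟨w, hwD⟩, rfl⟩, how, ⟨w, rfl⟩⟩, by rintro q rfl; exact hCU hwC⟩
    by_cases hcase : ∃ p ∈ C, (C ∩ Iio p).Nonempty ∧ (C ∩ Ioi p).Nonempty
    · obtain ⟨p, hpC, h1, h2⟩ := hcase
      obtain ⟨d1, hd1m, hd1D⟩ := hD.inter_open_nonempty _ (hCopen.inter (hIio p)) h1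
      obtain ⟨d2, hd2m, hd2D⟩ := hD.inter_open_nonempty _ (hCopen.inter (hIoi p)) h2
      refine ⟨Ioo d1 d2, ⟨⟨Sum.inl (⟨d1, hd1D⟩, ⟨d2, hd2D⟩), rfl⟩, (hIoi d1).inter (hIio d2),
        ⟨p, hd1m.2, hd2m.2⟩⟩, fun q hq => hCU (hconv d1 q d2 hd1m.1 hd2m.1 hq.1.le hq.2.le)⟩
    · replace hcase : ∀ p ∈ C, (C ∩ Iio p).Nonempty → ¬(C ∩ Ioi p).Nonempty :=
        fun p hp h1 h2 => hcase ⟨p, hp, h1, h2⟩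
      by_cases hbelow : (C ∩ Iio x).Nonempty
      · have hab : ¬(C ∩ Ioi x).Nonempty := hcase x hCx hbelow
        obtain ⟨w, hwC, hwx⟩ := hbelow
        have h1 : ¬(C ∩ Iio w).Nonempty := fun hne => hcase w hwC hne ⟨x, hCx, hwx⟩
        have hsing : C ∩ Iio x = {w} := by
          ext c; constructor
          · rintro ⟨hcC, hcx⟩
            by_contra hne
            rcases lt_or_gt_of_ne (hne : c ≠ w) with h | h
            · exact h1 ⟨c, hcC, h⟩
            · exact hcase c hcC ⟨w, hwC, h⟩ ⟨x, hCx, hcx⟩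
          · rintro rfl; exact ⟨hwC, hwx⟩
        exact hsingleton w hwC (hsing ▸ hCopen.inter (hIio x))
      · by_cases habove : (C ∩ Ioi x).Nonempty
        · obtain ⟨w, hwC, hxw⟩ := habove
          have h1 : ¬(C ∩ Ioi w).Nonempty := hcase w hwC ⟨x, hCx, hxw⟩
          have hsing : C ∩ Ioi x = {w} := by
            ext c; constructor
            · rintro ⟨hcC, hcx⟩
              by_contra hne
              rcases lt_or_gt_of_ne (hne : c ≠ w) with h | h
              · exact hcase c hcC ⟨x, hCx, hcx⟩ ⟨w, hwC, h⟩
              · exact h1 ⟨c, hcC, h⟩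
            · rintro rfl; exact ⟨hwC, hxw⟩
          exact hsingleton w hwC (hsing ▸ hCopen.inter (hIoi x))
        · have hsing : C = {x} := by
            ext c; constructor
            · intro hcC
              by_contra hne
              rcases lt_or_gt_of_ne (hne : c ≠ x) with h | h
              · exact hbelow ⟨c, hcC, h⟩
              · exact habove ⟨c, hcC, h⟩
            · rintro rfl; exact hCx
          exact hsingleton x hCx (hsing ▸ hCopen)
  · calc #(↥(Set.range f ∩ {S | IsOpen S ∧ S.Nonempty}))
        ≤ #(↥(Set.range f)) := mk_le_mk_of_subset inter_subset_left
      _ ≤ #((↥D × ↥D) ⊕ ↥D) := mk_range_le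
      _ ≤ max ℵ₀ #D := by
          have hm : max ℵ₀ #D * max ℵ₀ #D = max ℵ₀ #D :=
            Cardinal.mul_eq_self (le_max_left _ _)
          have h1 : #((↥D × ↥D) ⊕ ↥D) = #D * #D + #D := by simp
          rw [h1]
          calc #D * #D + #D ≤ max ℵ₀ #D * max ℵ₀ #D + max ℵ₀ #D := by
                gcongr <;> exact le_max_right _ _
            _ = max ℵ₀ #D + max ℵ₀ #D := by rw [hm]
            _ = max ℵ₀ #D := Cardinal.add_eq_self (le_max_left _ _)

lemma density_mem (X : Type u) [TopologicalSpace X] :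
    ℵ₀ ≤ Density X ∧ ∃ D : Set X, Dense D ∧ #D ≤ Density X := by
  have h : (max ℵ₀ #X) ∈ {κ : Cardinal.{u} | ℵ₀ ≤ κ ∧ ∃ D : Set X, Dense D ∧ #D ≤ κ} :=
    ⟨le_max_left _ _, Set.univ, dense_univ, by rw [mk_univ]; exact le_max_right _ _⟩
  exact csInf_mem ⟨_, h⟩

lemma piweight_mem (X : Type u) [TopologicalSpace X] :
    ℵ₀ ≤ PiWeight X ∧ ∃ B : Set (Set X), IsPiBase B ∧ #B ≤ PiWeight X := by
  have h : (max ℵ₀ #(Set X)) ∈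
      {κ : Cardinal.{u} | ℵ₀ ≤ κ ∧ ∃ B : Set (Set X), IsPiBase B ∧ #B ≤ κ} :=
    ⟨le_max_left _ _, {S | IsOpen S ∧ S.Nonempty},
      ⟨fun U hU => hU, fun U h1 h2 => ⟨U, ⟨h1, h2⟩, subset_rfl⟩⟩,
      le_trans (mk_set_le _) (le_max_right _ _)⟩
  exact csInf_mem ⟨_, h⟩

/-- If `X` is a product of GO-spaces with `|I| ≤ d(X)`, then `πw(X) = d(X)`. -/
theorem statement18 {I : Type u} {X : I → Type u}
    [∀ i, LinearOrder (X i)] [∀ i, TopologicalSpace (X i)]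
    (hGO : ∀ i, IsGOSpace (X i)) (hI : #I ≤ Density (∀ i, X i)) :
    PiWeight (∀ i, X i) = Density (∀ i, X i) := by
  classical
  set κ := Density (∀ i, X i) with hκdef
  obtain ⟨hκ, D, hDdense, hDle⟩ := density_mem (∀ i, X i)
  refine le_antisymm ?_ ?_
  · -- PiWeight ≤ Density
    by_cases hne : Nonempty (∀ i, X i)
    · haveI := hne
      haveI : ∀ i, Nonempty (X i) := fun i => ⟨(Classical.arbitrary (∀ j, X j)) i⟩
      -- dense projections
      have hDi : ∀ i, Dense ((fun f : ∀ j, X j => f i) '' D) := by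
        intro i
        rw [dense_iff_inter_open]
        rintro U hU ⟨x, hx⟩
        have hop : IsOpen ((fun f : ∀ j, X j => f i) ⁻¹' U) :=
          (continuous_apply i).isOpen_preimage U hU
        have hpne : ((fun f : ∀ j, X j => f i) ⁻¹' U).Nonempty :=
          ⟨Function.update (Classical.arbitrary _) i x, by
            simp [Function.update_self, hx]⟩
        obtain ⟨d, hd1, hd2⟩ := hDdense.inter_open_nonempty _ hop hpne
        exact ⟨d i, hd1, ⟨d, hd2, rfl⟩⟩
      choose B hBpi hBle using fun i => go_pibase (hGO i) (hDi i)
      have hBκ : ∀ i, #(B i) ≤ κ := fun i =>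
        (hBle i).trans (max_le hκ (le_trans mk_image_le hDle))
      -- the product π-base
      set g : (Σ s : Finset I, ∀ i : s, ↥(B i)) → Set (∀ i, X i) :=
        fun p => {f | ∀ i (h : i ∈ p.1), f i ∈ (p.2 ⟨i, h⟩ : Set (X (i)))} with hg
      have hgpi : ∀ p, g p = Set.pi (↑p.1)
          (fun i => if h : i ∈ p.1 then (p.2 ⟨i, h⟩ : Set (X i)) else Set.univ) := by
        rintro ⟨s, V⟩
        ext f
        simp only [hg, Set.mem_setOf_eq, Set.mem_pi, Finset.mem_coe]
        constructor
        · intro h i hi; rw [dif_pos hi]; exact h i hi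
        · intro h i hi; have := h i hi; rwa [dif_pos hi] at this
      have hPpi : IsPiBase (Set.range g) := by
        constructor
        · rintro U ⟨⟨s, V⟩, rfl⟩
          constructor
          · rw [hgpi]
            refine isOpen_set_pi s.finite_toSet ?_
            intro i hi
            rw [dif_pos (Finset.mem_coe.1 hi)]
            exact ((hBpi i).1 _ (V ⟨i, Finset.mem_coe.1 hi⟩).2).1
          · refine ⟨fun i => if h : i ∈ s then
              (((hBpi i).1 _ (V ⟨i, h⟩).2).2).choose else Classical.arbitrary _, ?_⟩
            intro i h
            simp only [dif_pos h]
            exact (((hBpi i).1 _ (V ⟨i, h⟩).2).2).choose_spec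
        · rintro U hU ⟨x, hx⟩
          rw [isOpen_pi_iff] at hU
          obtain ⟨s, u, h1, h2⟩ := hU x hx
          have hch : ∀ i : s, ∃ V ∈ B (i : I), V ⊆ u i :=
            fun i => (hBpi i).2 _ (h1 i i.2).1 ⟨x i, (h1 i i.2).2⟩
          choose V hVB hVu using hch
          refine ⟨g ⟨s, fun i => ⟨V i, hVB i⟩⟩, ⟨_, rfl⟩, ?_⟩
          intro f hf
          apply h2
          rw [Set.mem_pi]
          intro i hi
          exact hVu ⟨i, hi⟩ (hf i hi)
      have hPcard : #(Set.range g) ≤ κ := by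
        refine le_trans mk_range_le ?_
        rw [mk_sigma]
        have hterm : ∀ s : Finset I, #(∀ i : s, ↥(B (i : I))) ≤ κ := by
          intro s
          rw [mk_pi]
          calc Cardinal.prod (fun i : s => #(↥(B (i : I))))
              ≤ Cardinal.prod (fun _ : s => κ) :=
                Cardinal.prod_le_prod _ _ (fun i => hBκ i)
            _ = κ ^ #s := Cardinal.prod_const' _ _
            _ = κ ^ (s.card : Cardinal) := by rw [mk_coe_finset]
            _ = κ ^ (s.card : ℕ) := Cardinal.power_natCast _ _
            _ ≤ κ := Cardinal.power_nat_le hκ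
        calc Cardinal.sum (fun s : Finset I => #(∀ i : s, ↥(B (i : I))))
            ≤ Cardinal.sum (fun _ : Finset I => κ) := Cardinal.sum_le_sum _ _ hterm
          _ = #(Finset I) * κ := Cardinal.sum_const' _ _
          _ ≤ κ * κ := by
              refine mul_le_mul' ?_ le_rfl
              cases finite_or_infinite I with
              | inl h =>
                  haveI := h
                  haveI := Fintype.ofFinite I
                  exact le_trans (le_of_lt (Cardinal.lt_aleph0_of_finite _)) hκ
              | inr h => rw [Cardinal.mk_finset_of_infinite]; exact hI
          _ = κ := Cardinal.mul_eq_self hκ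
      exact csInf_le (OrderBot.bddBelow _) ⟨hκ, Set.range g, hPpi, hPcard⟩
    · -- empty product
      have hpb : IsPiBase (∅ : Set (Set (∀ i, X i))) :=
        ⟨fun U hU => absurd hU (Set.notMem_empty U),
          fun U _ hUne => absurd ⟨hUne.choose⟩ hne⟩
      exact le_trans (csInf_le (OrderBot.bddBelow _) ⟨le_rfl, ∅, hpb, by simp⟩) hκ
  · -- Density ≤ PiWeight
    obtain ⟨hℵ, B, hB, hBle⟩ := piweight_mem (∀ i, X i)
    choose pt hpt using fun V : B => (hB.1 V V.2).2
    have hdense : Dense (Set.range pt) := by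
      rw [dense_iff_inter_open]
      intro U hU hUne
      obtain ⟨V, hVB, hVU⟩ := hB.2 U hU hUne
      exact ⟨pt ⟨V, hVB⟩, hVU (hpt ⟨V, hVB⟩), ⟨_, rfl⟩⟩
    exact csInf_le (OrderBot.bddBelow _) ⟨hℵ, Set.range pt, hdense, le_trans mk_range_le hBle⟩
end
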